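/- arXiv:1411.5886 — 12 statements merged into one kernel-verified Lean document; each statement's English description precedes it below -/
import Mathlib

section
/- There exists a unique θ_c > 0 (with θ_c ∈ (0.141, 0.142)) such that: if 0 < θ < θ_c then the cubic equation θy³ − y² + (θ² + 1)y − 2θ = 0 has exactly three real solutions y₃ < y₂ < y₁, all positive; if θ = θ_c then it has exactly two positive solutions y₂ < y₁; and if θ > θ_c then it has exactly one positive solution y₁. -/
/-!
Write `f_θ(y) = θy³ − y² + (θ² + 1)y − 2θ` and `Δ(θ)` for its discriminant. For `θ > 0` we have
`f_θ < 0` on `(-∞, 0]` and `f_θ(2/θ) > 0`, so `f_θ` has a root `r` and all its roots are positive.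
Dividing by `y - r` leaves a quadratic `q` with `Δ = f_θ'(r)² · disc q`: for `Δ > 0` the roots of
`q` are two new ones, for `Δ < 0` it has none, and for `Δ = 0` one of `r` and the root of `q` is
double, giving two distinct roots unless `f_θ` is a perfect cube. The polynomial `Δ(θ)` vanishes in
`(0.141, 0.142)`, is decreasing on `[0, 0.15]` and negative beyond, which yields `θ_c`; it is
unique because on either side of it there are three positive roots where the other candidate would
have only two.
-/

open Set

namespace Cubic

section CommRing

variable {R : Type*} [CommRing R] {P : Cubic R} {r : R}

theorem eval_toPoly (P : Cubic R) (x : R) :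
    P.toPoly.eval x = P.a * x ^ 3 + P.b * x ^ 2 + P.c * x + P.d := by
  simp [toPoly]

theorem eval_toPoly_eq_mul_of_eval_eq_zero (hr : P.toPoly.eval r = 0) (x : R) :
    P.toPoly.eval x =
      (x - r) * (P.a * (x * x) + (P.b + P.a * r) * x + (P.c + P.b * r + P.a * r ^ 2)) := by
  rw [eval_toPoly] at hr ⊢
  linear_combination hr

theorem discr_eq_of_eval_eq_zero (hr : P.toPoly.eval r = 0) :
    P.discr = (3 * P.a * r ^ 2 + 2 * P.b * r + P.c) ^ 2 *
      discrim P.a (P.b + P.a * r) (P.c + P.b * r + P.a * r ^ 2) := by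
  rw [eval_toPoly] at hr
  rw [discr, discrim]
  linear_combination (18 * P.a * P.b * P.c - 4 * P.b ^ 3 -
    27 * P.a ^ 2 * (P.d - (P.a * r ^ 3 + P.b * r ^ 2 + P.c * r))) * hr

theorem setOf_eval_toPoly_eq_zero [IsDomain R] (hr : P.toPoly.eval r = 0) :
    {x | P.toPoly.eval x = 0} =
      insert r {x | P.a * (x * x) + (P.b + P.a * r) * x + (P.c + P.b * r + P.a * r ^ 2) = 0} := by
  ext x
  simp only [mem_ofPred_eq, mem_insert_iff, eval_toPoly_eq_mul_of_eval_eq_zero hr x, mul_eq_zero,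
    sub_eq_zero]

end CommRing

section LinearOrderedField

variable {K : Type*} [Field K] [LinearOrder K] [IsStrictOrderedRing K] {P : Cubic K} {r : K}

theorem setOf_eval_toPoly_eq_zero_of_discr_neg (hr : P.toPoly.eval r = 0) (hD : P.discr < 0) :
    {x | P.toPoly.eval x = 0} = {r} := by
  rw [discr_eq_of_eval_eq_zero hr] at hD
  have hΔ := neg_of_mul_neg_right hD (sq_nonneg _)
  rw [setOf_eval_toPoly_eq_zero hr, ← insert_empty_eq]
  congr 1
  exact eq_empty_of_forall_notMem fun x ↦
    quadratic_ne_zero_of_discrim_ne_sq (fun s hs ↦ (hs ▸ hΔ).not_ge (sq_nonneg s)) x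

end LinearOrderedField

section Field

variable {K : Type*} [Field K] [NeZero (2 : K)] {P : Cubic K} {r : K}

theorem exists_setOf_eval_toPoly_eq_zero_eq_pair_of_discr_eq_zero (ha : P.a ≠ 0)
    (hP : P.b ^ 2 ≠ 3 * P.a * P.c) (hr : P.toPoly.eval r = 0) (hD : P.discr = 0) :
    ∃ s, s ≠ r ∧ {x | P.toPoly.eval x = 0} = {r, s} := by
  rw [setOf_eval_toPoly_eq_zero hr]
  rw [discr_eq_of_eval_eq_zero hr, mul_eq_zero, pow_eq_zero_iff two_ne_zero] at hD
  by_cases hr' : 3 * P.a * r ^ 2 + 2 * P.b * r + P.c = 0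
  · refine ⟨-(P.b + 2 * P.a * r) / P.a, fun h ↦ hP ?_, ?_⟩
    · rw [div_eq_iff ha] at h
      linear_combination -(P.b + 3 * P.a * r) * h - 3 * P.a * hr'
    · ext x
      have hq : P.a * (x * x) + (P.b + P.a * r) * x + (P.c + P.b * r + P.a * r ^ 2) =
          (x - r) * (P.a * x + P.b + 2 * P.a * r) := by linear_combination hr'
      simp only [mem_ofPred_eq, mem_insert_iff, mem_singleton_iff, hq, mul_eq_zero, sub_eq_zero,
        eq_div_iff ha]
      constructor
      · rintro (h | h | h)
        exacts [.inl h, .inl h, .inr (by linear_combination h)]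
      · rintro (h | h)
        exacts [.inl h, .inr (.inr (by linear_combination h))]
  · have hΔ := hD.resolve_left hr'
    refine ⟨-(P.b + P.a * r) / (2 * P.a), fun h ↦ hr' ?_, ?_⟩
    · have := (quadratic_eq_zero_iff_of_discrim_eq_zero ha hΔ r).2 h.symm
      linear_combination this
    · congr 1
      ext x
      exact quadratic_eq_zero_iff_of_discrim_eq_zero ha hΔ x

end Field

theorem exists_setOf_eval_toPoly_eq_zero_eq_triple_of_discr_pos {P : Cubic ℝ} {r : ℝ}
    (ha : P.a ≠ 0) (hr : P.toPoly.eval r = 0) (hD : 0 < P.discr) :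
    ∃ s t, r ≠ s ∧ r ≠ t ∧ s ≠ t ∧ {x | P.toPoly.eval x = 0} = {r, s, t} := by
  rw [discr_eq_of_eval_eq_zero hr] at hD
  have hr' : P.a * (r * r) + (P.b + P.a * r) * r + (P.c + P.b * r + P.a * r ^ 2) ≠ 0 := by
    intro h
    rw [show 3 * P.a * r ^ 2 + 2 * P.b * r + P.c = 0 by linear_combination h] at hD
    simp at hD
  have hΔ := pos_of_mul_pos_right hD (sq_nonneg _)
  have hσ := (Real.mul_self_sqrt hΔ.le).symm
  have hσ₀ := (Real.sqrt_pos.2 hΔ).ne'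
  have hq := quadratic_eq_zero_iff ha hσ
  refine ⟨_, _, fun h ↦ hr' ((hq r).2 (.inl h)), fun h ↦ hr' ((hq r).2 (.inr h)), fun h ↦ hσ₀ ?_,
    ?_⟩
  · rw [div_left_inj' (mul_ne_zero two_ne_zero ha)] at h
    linarith
  · rw [setOf_eval_toPoly_eq_zero hr]
    ext x
    exact or_congr_right (hq x)

end Cubic

theorem exists_lt_lt_and_insert_eq {α : Type*} [LinearOrder α] {x y z : α} (hxy : x ≠ y)
    (hxz : x ≠ z) (hyz : y ≠ z) :
    ∃ a b c : α, a < b ∧ b < c ∧ ({x, y, z} : Set α) = {c, b, a} := by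
  wlog hyz' : y < z generalizing y z
  · obtain ⟨a, b, c, hab, hbc, h⟩ := this hxz hxy hyz.symm (lt_of_le_of_ne (not_lt.1 hyz') hyz.symm)
    exact ⟨a, b, c, hab, hbc, by rw [pair_comm, h]⟩
  rcases hxy.lt_or_gt with hxy' | hxy'
  · exact ⟨x, y, z, hxy', hyz', by ext; simp only [mem_insert_iff, mem_singleton_iff]; tauto⟩
  rcases hxz.lt_or_gt with hxz' | hxz'
  · exact ⟨y, x, z, hxy', hxz', by ext; simp only [mem_insert_iff, mem_singleton_iff]; tauto⟩
  · exact ⟨y, z, x, hyz', hxz', by ext; simp only [mem_insert_iff, mem_singleton_iff]; tauto⟩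

def sosCubic (θ : ℝ) : Cubic ℝ := ⟨θ, -1, θ ^ 2 + 1, -2 * θ⟩

theorem eval_sosCubic (θ y : ℝ) :
    (sosCubic θ).toPoly.eval y = θ * y ^ 3 - y ^ 2 + (θ ^ 2 + 1) * y - 2 * θ := by
  rw [Cubic.eval_toPoly, sosCubic]
  ring

theorem discr_sosCubic (θ : ℝ) :
    (sosCubic θ).discr =
      1 - 12 * θ + 38 * θ ^ 2 - (12 * θ ^ 3 + 71 * θ ^ 4 + 12 * θ ^ 5 + 4 * θ ^ 7) := by
  rw [Cubic.discr, sosCubic]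
  ring

theorem continuous_discr_sosCubic : Continuous fun θ ↦ (sosCubic θ).discr := by
  simp only [discr_sosCubic]
  fun_prop

theorem strictAntiOn_discr_sosCubic : StrictAntiOn (fun θ ↦ (sosCubic θ).discr) (Icc 0 0.15) := by
  intro x hx y hy hxy
  have hpow {n : ℕ} (hn : n ≠ 0) : x ^ n < y ^ n := pow_lt_pow_left₀ hxy hx.1 hn
  have hquad : 0 < (y - x) * (12 - 38 * (x + y)) :=
    mul_pos (by linarith) (by norm_num at hy; linarith [hy.2])
  simp only [discr_sosCubic]
  -- `1 - 12θ + 38θ²` decreases on `[0, 6/19]`, and the bracketed terms increase on `[0, ∞)`.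
  nlinarith [hpow (n := 3) (by norm_num), hpow (n := 4) (by norm_num), hpow (n := 5) (by norm_num),
    hpow (n := 7) (by norm_num)]

theorem discr_sosCubic_neg {θ : ℝ} (hθ : 0.15 ≤ θ) : (sosCubic θ).discr < 0 := by
  have hθ₀ : 0 < θ := by norm_num at hθ; linarith
  rw [discr_sosCubic]
  nlinarith [pow_pos hθ₀ 5, pow_pos hθ₀ 7, mul_nonneg (sub_nonneg.2 hθ) (sq_nonneg (θ - 0.3)),
    sq_nonneg (θ ^ 2 + θ - 0.2), mul_nonneg (sub_nonneg.2 hθ) (sq_nonneg (θ - 0.15))]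

theorem pos_of_eval_sosCubic_eq_zero {θ y : ℝ} (hθ : 0 < θ) (hy : (sosCubic θ).toPoly.eval y = 0) :
    0 < y := by
  rw [eval_sosCubic] at hy
  by_contra! hy₀
  nlinarith [mul_nonpos_of_nonneg_of_nonpos hθ.le (Odd.pow_nonpos (by decide) hy₀ : y ^ 3 ≤ 0),
    mul_nonpos_of_nonneg_of_nonpos (by positivity : 0 ≤ θ ^ 2 + 1) hy₀]

theorem exists_eval_sosCubic_eq_zero {θ : ℝ} (hθ : 0 < θ) :
    ∃ r, (sosCubic θ).toPoly.eval r = 0 := by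
  have h₀ : (sosCubic θ).toPoly.eval 0 ≤ 0 := by rw [eval_sosCubic]; linarith
  have h₁ : 0 ≤ (sosCubic θ).toPoly.eval (2 / θ) := by
    rw [eval_sosCubic, show θ * (2 / θ) ^ 3 - (2 / θ) ^ 2 + (θ ^ 2 + 1) * (2 / θ) - 2 * θ =
      4 / θ ^ 2 + 2 / θ by field_simp; ring]
    positivity
  exact intermediate_value_univ 0 (2 / θ) (sosCubic θ).toPoly.continuous ⟨h₀, h₁⟩

theorem sosCubic_b_sq_ne {θ : ℝ} (hθ : θ ≤ 0.15) :
    (sosCubic θ).b ^ 2 ≠ 3 * (sosCubic θ).a * (sosCubic θ).c := by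
  norm_num [sosCubic] at hθ ⊢
  nlinarith [mul_nonneg (sub_nonneg.2 hθ) (by positivity : (0 : ℝ) ≤ (θ + 0.075) ^ 2 + 1)]

theorem exists_three_roots_sosCubic {θ : ℝ} (hθ : 0 < θ) (hD : 0 < (sosCubic θ).discr) :
    ∃ y₁ y₂ y₃ : ℝ, y₃ < y₂ ∧ y₂ < y₁ ∧ 0 < y₃ ∧
      {y | (sosCubic θ).toPoly.eval y = 0} = {y₁, y₂, y₃} := by
  obtain ⟨r, hr⟩ := exists_eval_sosCubic_eq_zero hθ
  obtain ⟨s, t, hrs, hrt, hst, hroots⟩ :=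
    Cubic.exists_setOf_eval_toPoly_eq_zero_eq_triple_of_discr_pos hθ.ne' hr hD
  obtain ⟨a, b, c, hab, hbc, hsort⟩ := exists_lt_lt_and_insert_eq hrs hrt hst
  have ha : (sosCubic θ).toPoly.eval a = 0 :=
    show a ∈ {y | (sosCubic θ).toPoly.eval y = 0} by simp [hroots, hsort]
  exact ⟨c, b, a, hab, hbc, pos_of_eval_sosCubic_eq_zero hθ ha, hroots.trans hsort⟩

theorem setOf_pos_and_eval_sosCubic_eq_zero {θ : ℝ} (hθ : 0 < θ) :
    {y | 0 < y ∧ (sosCubic θ).toPoly.eval y = 0} = {y | (sosCubic θ).toPoly.eval y = 0} :=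
  ext fun _ ↦ and_iff_right_of_imp (pos_of_eval_sosCubic_eq_zero hθ)

theorem exists_two_pos_roots_sosCubic {θ : ℝ} (hθ : 0 < θ) (hθ' : θ ≤ 0.15)
    (hD : (sosCubic θ).discr = 0) :
    ∃ y₁ y₂ : ℝ, y₂ < y₁ ∧ {y | 0 < y ∧ (sosCubic θ).toPoly.eval y = 0} = {y₁, y₂} := by
  obtain ⟨r, hr⟩ := exists_eval_sosCubic_eq_zero hθ
  obtain ⟨s, hsr, hroots⟩ := Cubic.exists_setOf_eval_toPoly_eq_zero_eq_pair_of_discr_eq_zero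
    hθ.ne' (sosCubic_b_sq_ne hθ') hr hD
  rw [setOf_pos_and_eval_sosCubic_eq_zero hθ, hroots]
  rcases hsr.lt_or_gt with h | h
  exacts [⟨r, s, h, rfl⟩, ⟨s, r, h, pair_comm r s⟩]

theorem existsUnique_pos_root_sosCubic {θ : ℝ} (hθ : 0 < θ) (hD : (sosCubic θ).discr < 0) :
    ∃! y : ℝ, 0 < y ∧ (sosCubic θ).toPoly.eval y = 0 := by
  obtain ⟨r, hr⟩ := exists_eval_sosCubic_eq_zero hθ
  have hroots := Cubic.setOf_eval_toPoly_eq_zero_of_discr_neg hr hD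
  rw [← setOf_pos_and_eval_sosCubic_eq_zero hθ] at hroots
  have hmem (y : ℝ) : 0 < y ∧ (sosCubic θ).toPoly.eval y = 0 ↔ y = r :=
    (Set.ext_iff.1 hroots y).trans mem_singleton_iff
  exact ⟨r, (hmem r).2 rfl, fun y hy ↦ (hmem y).1 hy⟩

theorem not_exists_pair_of_exists_three {p : ℝ → Prop}
    (h₃ : ∃ y₁ y₂ y₃ : ℝ, y₃ < y₂ ∧ y₂ < y₁ ∧ 0 < y₃ ∧ {y | p y} = {y₁, y₂, y₃}) :
    ¬ ∃ y₁ y₂ : ℝ, y₂ < y₁ ∧ {y | 0 < y ∧ p y} = {y₁, y₂} := by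
  obtain ⟨x₁, x₂, x₃, h₂₃, h₁₂, hx₃, hx⟩ := h₃
  rintro ⟨y₁, y₂, -, hy⟩
  have hsub : ({x₁, x₂, x₃} : Set ℝ) ⊆ {y₁, y₂} := by
    rw [← hy]
    intro z hz
    refine ⟨?_, show z ∈ {y | p y} by rw [hx]; exact hz⟩
    simp only [mem_insert_iff, mem_singleton_iff] at hz
    rcases hz with h | h | h <;> linarith
  simp only [insert_subset_iff, mem_insert_iff, mem_singleton_iff, singleton_subset_iff] at hsub
  rcases hsub with ⟨h₁ | h₁, h₂ | h₂, h₃ | h₃⟩ <;> linarith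

/-- There is a unique `θ_c > 0` (lying in `(0.141, 0.142)`) such that the
cubic `θ y³ - y² + (θ² + 1) y - 2θ = 0` has exactly three (positive) real solutions for
`0 < θ < θ_c`, exactly two positive solutions at `θ = θ_c`, and exactly one positive
solution for `θ > θ_c`. -/
theorem sos_cubic_root_classification :
    ∃! θc : ℝ, 0 < θc ∧ θc ∈ Set.Ioo (0.141 : ℝ) 0.142 ∧
      (∀ θ : ℝ, 0 < θ → θ < θc →
        ∃ y₁ y₂ y₃ : ℝ, y₃ < y₂ ∧ y₂ < y₁ ∧ 0 < y₃ ∧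
          {y : ℝ | θ * y ^ 3 - y ^ 2 + (θ ^ 2 + 1) * y - 2 * θ = 0} = {y₁, y₂, y₃}) ∧
      (∃ y₁ y₂ : ℝ, y₂ < y₁ ∧
        {y : ℝ | 0 < y ∧ θc * y ^ 3 - y ^ 2 + (θc ^ 2 + 1) * y - 2 * θc = 0} = {y₁, y₂}) ∧
      (∀ θ : ℝ, θc < θ →
        ∃! y : ℝ, 0 < y ∧ θ * y ^ 3 - y ^ 2 + (θ ^ 2 + 1) * y - 2 * θ = 0) := by
  simp only [← eval_sosCubic]
  obtain ⟨θc, hθc, hDc⟩ : ∃ θc ∈ Ioo (0.141 : ℝ) 0.142, (sosCubic θc).discr = 0 :=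
    intermediate_value_Ioo' (by norm_num) continuous_discr_sosCubic.continuousOn
      ⟨by norm_num [discr_sosCubic], by norm_num [discr_sosCubic]⟩
  have hθc₀ : 0 < θc := by linarith [hθc.1]
  have hθc₁ : θc ≤ 0.15 := by linarith [hθc.2]
  have hpos {θ : ℝ} (hθ : 0 < θ) (hlt : θ < θc) : 0 < (sosCubic θ).discr :=
    hDc ▸ strictAntiOn_discr_sosCubic ⟨hθ.le, by linarith⟩ ⟨hθc₀.le, hθc₁⟩ hlt
  have hneg {θ : ℝ} (hlt : θc < θ) : (sosCubic θ).discr < 0 := by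
    rcases le_or_gt θ 0.15 with h | h
    · exact hDc ▸ strictAntiOn_discr_sosCubic ⟨hθc₀.le, hθc₁⟩ ⟨by linarith, h⟩ hlt
    · exact discr_sosCubic_neg h.le
  refine ⟨θc, ⟨hθc₀, hθc, fun θ hθ hlt ↦ exists_three_roots_sosCubic hθ (hpos hθ hlt),
    exists_two_pos_roots_sosCubic hθc₀ hθc₁ hDc,
    fun θ hlt ↦ existsUnique_pos_root_sosCubic (hθc₀.trans hlt) (hneg hlt)⟩, ?_⟩
  rintro θ ⟨hθ, -, h₃, h₂, -⟩
  rcases lt_trichotomy θ θc with hlt | heq | hgt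
  · exact absurd h₂ (not_exists_pair_of_exists_three (exists_three_roots_sosCubic hθ (hpos hθ hlt)))
  · exact heq
  · exact absurd (exists_two_pos_roots_sosCubic hθc₀ hθc₁ hDc)
      (not_exists_pair_of_exists_three (h₃ θc hθc₀ hgt))
end

section
/- Let 0 < θ < 1 and let x, y > 0 satisfy the boundary-law system x = (x² + θy² + θ²)/(θ²x² + θy² + 1) and y = (θx² + y² + θ)/(θ²x² + θy² + 1) with x ≠ 1. Then x satisfies the quartic equation θ³x⁴ + θ(3θ² − 1)x³ + (4θ³ − 2θ + 1)x² + θ(3θ² − 1)x + θ³ = 0. -/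
/-- If `0 < θ < 1` and `x, y > 0` solve the boundary-law system with `x ≠ 1`,
then `x` satisfies the quartic `θ³x⁴ + θ(3θ² - 1)x³ + (4θ³ - 2θ + 1)x² + θ(3θ² - 1)x + θ³ = 0`. -/
theorem sos_nonsymmetric_quartic (θ x y : ℝ) (hθ0 : 0 < θ) (hθ1 : θ < 1)
    (hx : 0 < x) (hy : 0 < y) (hx1 : x ≠ 1)
    (h1 : x = (x ^ 2 + θ * y ^ 2 + θ ^ 2) / (θ ^ 2 * x ^ 2 + θ * y ^ 2 + 1))
    (h2 : y = (θ * x ^ 2 + y ^ 2 + θ) / (θ ^ 2 * x ^ 2 + θ * y ^ 2 + 1)) :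
    θ ^ 3 * x ^ 4 + θ * (3 * θ ^ 2 - 1) * x ^ 3 + (4 * θ ^ 3 - 2 * θ + 1) * x ^ 2
      + θ * (3 * θ ^ 2 - 1) * x + θ ^ 3 = 0 := by
  have hD : (0:ℝ) < θ ^ 2 * x ^ 2 + θ * y ^ 2 + 1 := by positivity
  rw [eq_div_iff hD.ne'] at h1 h2
  -- factor the first equation
  have hfac : (x - 1) * (θ * y ^ 2 + θ ^ 2 * (x ^ 2 + x + 1) - x) = 0 := by
    linear_combination h1
  have hx1' : x - 1 ≠ 0 := sub_ne_zero.mpr hx1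
  have e1 : θ * y ^ 2 = x - θ ^ 2 * (x ^ 2 + x + 1) := by
    rcases mul_eq_zero.mp hfac with h | h
    · exact absurd h hx1'
    · linarith
  have e2 : y * ((1 + x) * (1 - θ ^ 2)) = θ * x ^ 2 + y ^ 2 + θ := by
    linear_combination h2 - y * e1
  have hne : (1 - θ ^ 2) ^ 2 ≠ 0 := by nlinarith
  have h3 : (θ ^ 3 * x ^ 4 + θ * (3 * θ ^ 2 - 1) * x ^ 3 + (4 * θ ^ 3 - 2 * θ + 1) * x ^ 2
      + θ * (3 * θ ^ 2 - 1) * x + θ ^ 3) * (1 - θ ^ 2) ^ 2 = 0 := by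
    linear_combination
      (θ * ((1 + x) * (1 - θ ^ 2)) ^ 2
        - (θ * y ^ 2 - (x - θ ^ 2 * (x ^ 2 + x + 1)))
        - θ * (y * ((1 + x) * (1 - θ ^ 2)) - (θ * x ^ 2 + y ^ 2 + θ))
        - 2 * (θ ^ 2 * x ^ 2 + θ ^ 2 + (x - θ ^ 2 * (x ^ 2 + x + 1)))) * e1
      + (- θ * (θ * y ^ 2 - (x - θ ^ 2 * (x ^ 2 + x + 1)))
        - θ ^ 2 * (y * ((1 + x) * (1 - θ ^ 2)) - (θ * x ^ 2 + y ^ 2 + θ))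
        - 2 * θ * (θ ^ 2 * x ^ 2 + θ ^ 2 + (x - θ ^ 2 * (x ^ 2 + x + 1)))) * e2
  exact (mul_eq_zero.mp h3).resolve_right hne
end

section
/- Let θ_c' = (1/3)·( (26 + 6√33)^{1/3} − 8/(26 + 6√33)^{1/3} − 1 ). Then θ_c' is the unique real root of the cubic t³ + t² + 3t − 1 = 0, θ_c' ∈ (0.295, 0.296), and for 0 < θ < 1 the quantity (θ − 1)(θ³ + θ² + 3θ − 1) is positive if θ < θ_c', zero if θ = θ_c', and negative if θ > θ_c'. -/
private lemma cubic_mono {a b : ℝ} (hab : a < b) :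
    a ^ 3 + a ^ 2 + 3 * a < b ^ 3 + b ^ 2 + 3 * b := by
  have hf : 0 < b ^ 2 + a * b + a ^ 2 + a + b + 3 := by
    nlinarith [sq_nonneg (a + b), sq_nonneg (a + 1), sq_nonneg (b + 1)]
  nlinarith [mul_pos (sub_pos.mpr hab) hf]

/-- The explicit value `θ_c' = (1/3)((26 + 6√33)^{1/3} - 8/(26 + 6√33)^{1/3} - 1)`
is the unique real root of `t³ + t² + 3t - 1 = 0`, lies in `(0.295, 0.296)`, and for
`0 < θ < 1` the quantity `(θ - 1)(θ³ + θ² + 3θ - 1)` is positive, zero, negative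
according as `θ < θ_c'`, `θ = θ_c'`, `θ > θ_c'`. -/
theorem sos_theta_c_prime_properties :
    let c : ℝ := (26 + 6 * Real.sqrt 33) ^ ((1 : ℝ) / 3)
    let θc' : ℝ := (1 / 3) * (c - 8 / c - 1)
    (θc' ^ 3 + θc' ^ 2 + 3 * θc' - 1 = 0 ∧
      ∀ t : ℝ, t ^ 3 + t ^ 2 + 3 * t - 1 = 0 → t = θc') ∧
    θc' ∈ Set.Ioo (0.295 : ℝ) 0.296 ∧
    ∀ θ : ℝ, 0 < θ → θ < 1 →
      (θ < θc' → 0 < (θ - 1) * (θ ^ 3 + θ ^ 2 + 3 * θ - 1)) ∧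
      (θ = θc' → (θ - 1) * (θ ^ 3 + θ ^ 2 + 3 * θ - 1) = 0) ∧
      (θc' < θ → (θ - 1) * (θ ^ 3 + θ ^ 2 + 3 * θ - 1) < 0) := by
  intro c θc'
  set s : ℝ := Real.sqrt 33 with hs_def
  have hs2 : s ^ 2 = 33 := Real.sq_sqrt (by norm_num)
  have hs_pos : 0 < s := Real.sqrt_pos.mpr (by norm_num)
  have hx_pos : (0 : ℝ) < 26 + 6 * s := by nlinarith
  have hc_pos : 0 < c := Real.rpow_pos_of_pos hx_pos _
  have hc_ne : c ≠ 0 := ne_of_gt hc_pos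
  have hc3 : c ^ 3 = 26 + 6 * s := by
    have : c ^ (3 : ℕ) = ((26 + 6 * s) ^ ((1 : ℝ) / 3)) ^ ((3 : ℕ) : ℝ) := by
      rw [Real.rpow_natCast]
    rw [this, ← Real.rpow_mul hx_pos.le]
    norm_num
  have hcd : c * (8 / c) = 8 := by field_simp
  have hd3 : (8 / c) ^ 3 = 6 * s - 26 := by
    have h512 : (26 + 6 * s) * (6 * s - 26) = 512 := by nlinarith
    have : (8 / c) ^ 3 = 512 / c ^ 3 := by ring
    rw [this, hc3]
    field_simp
    linarith [h512]
  have hkey : (c - 8 / c) ^ 3 = 52 - 24 * (c - 8 / c) := by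
    linear_combination hc3 - hd3 - 3 * (c - 8 / c) * hcd
  have hroot : θc' ^ 3 + θc' ^ 2 + 3 * θc' - 1 = 0 := by
    show ((1:ℝ)/3 * (c - 8/c - 1)) ^ 3 + ((1:ℝ)/3 * (c - 8/c - 1)) ^ 2
        + 3 * ((1:ℝ)/3 * (c - 8/c - 1)) - 1 = 0
    linear_combination (1 / 27 : ℝ) * hkey
  have huniq : ∀ t : ℝ, t ^ 3 + t ^ 2 + 3 * t - 1 = 0 → t = θc' := by
    intro t ht
    by_contra hne
    rcases lt_or_gt_of_ne hne with h | h
    · have := cubic_mono h; nlinarith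
    · have := cubic_mono h; nlinarith
  have hlo : (0.295 : ℝ) < θc' := by
    by_contra h
    push_neg at h
    rcases eq_or_lt_of_le h with h | h
    · nlinarith [hroot, h.symm]
    · have := cubic_mono h; nlinarith
  have hhi : θc' < (0.296 : ℝ) := by
    by_contra h
    push_neg at h
    rcases eq_or_lt_of_le h with h | h
    · nlinarith [hroot, h]
    · have := cubic_mono h; nlinarith
  refine ⟨⟨hroot, huniq⟩, ⟨hlo, hhi⟩, ?_⟩
  intro θ hθ0 hθ1
  refine ⟨?_, ?_, ?_⟩
  · intro hlt
    have := cubic_mono hlt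
    have hg : θ ^ 3 + θ ^ 2 + 3 * θ - 1 < 0 := by nlinarith
    nlinarith [mul_pos (sub_pos.mpr hθ1 : (0:ℝ) < 1 - θ) (neg_pos.mpr hg)]
  · intro heq; rw [heq, hroot]; ring
  · intro hlt
    have := cubic_mono hlt
    have hg : 0 < θ ^ 3 + θ ^ 2 + 3 * θ - 1 := by nlinarith
    nlinarith [mul_pos (sub_pos.mpr hθ1 : (0:ℝ) < 1 - θ) hg]
end

section
/- Let θ_c' = (1/3)·( (26 + 6√33)^{1/3} − 8/(26 + 6√33)^{1/3} − 1 ). For θ ∈ (0, 1), the quadratic equation θ³ξ² + θ(3θ² − 1)ξ + 2θ³ − 2θ + 1 = 0 in the real variable ξ has: exactly two solutions ξ₁ < ξ₂ if θ ∈ (0, θ_c'), where ξ₁ = (1 − 3θ² − √((θ−1)(θ³+θ²+3θ−1)))/(2θ²) and ξ₂ = (1 − 3θ² + √((θ−1)(θ³+θ²+3θ−1)))/(2θ²); exactly one solution ξ₁ = (1 − 3θ²)/(2θ²) if θ = θ_c'; and no real solution if θ ∈ (θ_c', 1). -/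
/-!
The discriminant of the quadratic in `ξ` is `θ² (θ - 1) P(θ)` with `P(t) = t³ + t² + 3t - 1`.
Since `P` is strictly increasing and `θc'` is its real root (Cardano's formula), for `0 < θ < 1`
the discriminant is positive, zero or negative according as `θ < θc'`, `θ = θc'` or `θ > θc'`,
and the quadratic formula gives the roots.
-/

section Quadratic

variable {K : Type*} [Field K] {a b c : K}

theorem setOf_quadratic_eq_zero [NeZero (2 : K)] (ha : a ≠ 0) {s : K} (h : discrim a b c = s * s) :
    {x | a * (x * x) + b * x + c = 0} = {(-b + s) / (2 * a), (-b - s) / (2 * a)} :=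
  Set.ext fun x => quadratic_eq_zero_iff ha h x

theorem setOf_quadratic_eq_zero_eq_empty [LinearOrder K] [IsStrictOrderedRing K]
    (h : discrim a b c < 0) : {x | a * (x * x) + b * x + c = 0} = ∅ :=
  Set.eq_empty_of_forall_notMem fun x =>
    quadratic_ne_zero_of_discrim_ne_sq (fun s hs => (hs ▸ h).not_ge (sq_nonneg s)) x

end Quadratic

theorem strictMono_cubic : StrictMono fun t : ℝ => t ^ 3 + t ^ 2 + 3 * t - 1 := by
  intro a b hab
  have hfactor : (b ^ 3 + b ^ 2 + 3 * b - 1) - (a ^ 3 + a ^ 2 + 3 * a - 1)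
      = (b - a) * (a ^ 2 + a * b + b ^ 2 + a + b + 3) := by ring
  have hpos : 0 < a ^ 2 + a * b + b ^ 2 + a + b + 3 := by
    nlinarith [sq_nonneg (a + b + 1), sq_nonneg a, sq_nonneg b]
  nlinarith [mul_pos (sub_pos.mpr hab) hpos]

theorem cubic_root_cardano :
    let c : ℝ := (26 + 6 * Real.sqrt 33) ^ ((1 : ℝ) / 3)
    let θc' : ℝ := (1 / 3) * (c - 8 / c - 1)
    θc' ^ 3 + θc' ^ 2 + 3 * θc' - 1 = 0 := by
  intro c θc'
  have hsqrt : Real.sqrt 33 ^ 2 = 33 := Real.sq_sqrt (by norm_num)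
  have hpos : (0 : ℝ) < 26 + 6 * Real.sqrt 33 := by positivity
  have hcube : c ^ 3 = 26 + 6 * Real.sqrt 33 := by
    change ((26 + 6 * Real.sqrt 33) ^ ((1 : ℝ) / 3)) ^ 3 = _
    rw [show (1 : ℝ) / 3 = ((3 : ℕ) : ℝ)⁻¹ by norm_num,
      Real.rpow_inv_natCast_pow hpos.le three_ne_zero]
  have hc : c ≠ 0 := (Real.rpow_pos_of_pos hpos _).ne'
  -- `(26 + 6√33)(6√33 - 26) = 8³`, so the two Cardano cube roots differ by `52`
  have hconj : (8 / c) ^ 3 = 6 * Real.sqrt 33 - 26 := by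
    rw [div_pow, hcube, div_eq_iff hpos.ne']
    linear_combination -36 * hsqrt
  have hdepressed : (c - 8 / c) ^ 3 + 24 * (c - 8 / c) = c ^ 3 - (8 / c) ^ 3 := by
    field_simp
    ring
  rw [hcube, hconj] at hdepressed
  linear_combination hdepressed / 27

theorem setOf_sos_quadratic (θ : ℝ) :
    {ξ : ℝ | θ ^ 3 * ξ ^ 2 + θ * (3 * θ ^ 2 - 1) * ξ + 2 * θ ^ 3 - 2 * θ + 1 = 0}
      = {ξ | θ ^ 3 * (ξ * ξ) + θ * (3 * θ ^ 2 - 1) * ξ + (2 * θ ^ 3 - 2 * θ + 1) = 0} := by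
  ext ξ
  simp only [Set.mem_ofPred_eq, sq ξ, add_sub_assoc, add_assoc]

theorem discrim_sos (θ : ℝ) :
    discrim (θ ^ 3) (θ * (3 * θ ^ 2 - 1)) (2 * θ ^ 3 - 2 * θ + 1)
      = θ ^ 2 * ((θ - 1) * (θ ^ 3 + θ ^ 2 + 3 * θ - 1)) := by
  rw [discrim]
  ring

theorem setOf_sos_quadratic_eq_pair {θ S : ℝ} (hθ : θ ≠ 0)
    (hS : S ^ 2 = (θ - 1) * (θ ^ 3 + θ ^ 2 + 3 * θ - 1)) :
    {ξ : ℝ | θ ^ 3 * ξ ^ 2 + θ * (3 * θ ^ 2 - 1) * ξ + 2 * θ ^ 3 - 2 * θ + 1 = 0}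
      = {(1 - 3 * θ ^ 2 - S) / (2 * θ ^ 2), (1 - 3 * θ ^ 2 + S) / (2 * θ ^ 2)} := by
  have hdiscrim : discrim (θ ^ 3) (θ * (3 * θ ^ 2 - 1)) (2 * θ ^ 3 - 2 * θ + 1)
      = -(θ * S) * -(θ * S) := by
    rw [discrim_sos, ← hS]
    ring
  rw [setOf_sos_quadratic, setOf_quadratic_eq_zero (pow_ne_zero 3 hθ) hdiscrim]
  congr 1
  · field_simp
    ring
  · congr 1
    field_simp
    ring

theorem setOf_sos_quadratic_eq_empty {θ : ℝ} (hθ : θ ≠ 0)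
    (hD : (θ - 1) * (θ ^ 3 + θ ^ 2 + 3 * θ - 1) < 0) :
    {ξ : ℝ | θ ^ 3 * ξ ^ 2 + θ * (3 * θ ^ 2 - 1) * ξ + 2 * θ ^ 3 - 2 * θ + 1 = 0} = ∅ := by
  rw [setOf_sos_quadratic, setOf_quadratic_eq_zero_eq_empty]
  rw [discrim_sos]
  exact mul_neg_of_pos_of_neg (by positivity) hD

/-- Solution count of the quadratic `θ³ξ² + θ(3θ² - 1)ξ + 2θ³ - 2θ + 1 = 0`
for `θ ∈ (0,1)`, with threshold `θ_c' = (1/3)((26 + 6√33)^{1/3} - 8/(26 + 6√33)^{1/3} - 1)`: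
two explicit solutions `ξ₁ < ξ₂` for `θ < θ_c'`, one solution for `θ = θ_c'`, none for
`θ > θ_c'`. -/
theorem sos_xi_quadratic_solutions :
    let c : ℝ := (26 + 6 * Real.sqrt 33) ^ ((1 : ℝ) / 3)
    let θc' : ℝ := (1 / 3) * (c - 8 / c - 1)
    ∀ θ : ℝ, 0 < θ → θ < 1 →
      (θ < θc' →
        ∃ ξ₁ ξ₂ : ℝ, ξ₁ < ξ₂ ∧
          ξ₁ = (1 - 3 * θ ^ 2 - Real.sqrt ((θ - 1) * (θ ^ 3 + θ ^ 2 + 3 * θ - 1)))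
              / (2 * θ ^ 2) ∧
          ξ₂ = (1 - 3 * θ ^ 2 + Real.sqrt ((θ - 1) * (θ ^ 3 + θ ^ 2 + 3 * θ - 1)))
              / (2 * θ ^ 2) ∧
          {ξ : ℝ | θ ^ 3 * ξ ^ 2 + θ * (3 * θ ^ 2 - 1) * ξ + 2 * θ ^ 3 - 2 * θ + 1 = 0}
            = {ξ₁, ξ₂}) ∧
      (θ = θc' →
        {ξ : ℝ | θ ^ 3 * ξ ^ 2 + θ * (3 * θ ^ 2 - 1) * ξ + 2 * θ ^ 3 - 2 * θ + 1 = 0}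
          = {(1 - 3 * θ ^ 2) / (2 * θ ^ 2)}) ∧
      (θc' < θ →
        {ξ : ℝ | θ ^ 3 * ξ ^ 2 + θ * (3 * θ ^ 2 - 1) * ξ + 2 * θ ^ 3 - 2 * θ + 1 = 0}
          = ∅) := by
  intro c θc' θ hθ0 hθ1
  have hroot : θc' ^ 3 + θc' ^ 2 + 3 * θc' - 1 = 0 := cubic_root_cardano
  have hθ : θ ≠ 0 := hθ0.ne'
  refine ⟨fun hlt => ?_, fun heq => ?_, fun hgt => ?_⟩
  · have hD : 0 < (θ - 1) * (θ ^ 3 + θ ^ 2 + 3 * θ - 1) :=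
      mul_pos_of_neg_of_neg (by linarith) ((strictMono_cubic hlt).trans_eq hroot)
    refine ⟨_, _, ?_, rfl, rfl, setOf_sos_quadratic_eq_pair hθ (Real.sq_sqrt hD.le)⟩
    gcongr
    linarith [Real.sqrt_pos.mpr hD]
  · rw [setOf_sos_quadratic_eq_pair (S := 0) hθ (by rw [heq, hroot]; ring)]
    simp only [sub_zero, add_zero, Set.pair_eq_singleton]
  · exact setOf_sos_quadratic_eq_empty hθ
      (mul_neg_of_neg_of_pos (by linarith) (hroot.symm.trans_lt (strictMono_cubic hgt)))
end

section
/- Let θ_c' be the unique real root of t³ + t² + 3t − 1 = 0 and let 0 < θ < θ_c'. Then the two roots ξ₁ = (1 − 3θ² − √((θ−1)(θ³+θ²+3θ−1)))/(2θ²) and ξ₂ = (1 − 3θ² + √((θ−1)(θ³+θ²+3θ−1)))/(2θ²) of the quadratic θ³ξ² + θ(3θ² − 1)ξ + 2θ³ − 2θ + 1 = 0 satisfy 2 < ξ₁ < ξ₂. -/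
/-!
The cubic `t³ + t² + 3t - 1` is strictly increasing, so it is negative at `θ < θ_c'`; together with
`θ > 0` this forces `θ < 1/3`. The discriminant of the quadratic is `θ² (θ - 1)(θ³ + θ² + 3θ - 1)`,
positive for such `θ`, which gives the two distinct roots. Finally `ξ₁ > 2` amounts to
`√((θ - 1)(θ³ + θ² + 3θ - 1)) < 1 - 7θ²`, and the gap of the squares is
`(1 - 7θ²)² - (θ - 1)(θ³ + θ² + 3θ - 1) = 4θ (12θ³ - 4θ + 1) > 0`.
-/

lemma strictMono_sos_cubic : StrictMono (fun t : ℝ => t ^ 3 + t ^ 2 + 3 * t - 1) := by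
  intro a b hab
  have hfactor : 0 < a ^ 2 + a * b + b ^ 2 + a + b + 3 := by
    nlinarith [sq_nonneg (a + b), sq_nonneg (a + 1), sq_nonneg (b + 1)]
  have hsub : 0 < b - a := sub_pos.2 hab
  show a ^ 3 + a ^ 2 + 3 * a - 1 < b ^ 3 + b ^ 2 + 3 * b - 1
  nlinarith [mul_pos hsub hfactor]

lemma three_mul_lt_one_of_sos_cubic_neg {θ : ℝ} (hθ0 : 0 < θ)
    (hc : θ ^ 3 + θ ^ 2 + 3 * θ - 1 < 0) : 3 * θ < 1 := by
  nlinarith [pow_pos hθ0 3, pow_pos hθ0 2]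

lemma sos_quadratic_roots {θ s : ℝ} (hθ : θ ≠ 0)
    (hs : s ^ 2 = (θ - 1) * (θ ^ 3 + θ ^ 2 + 3 * θ - 1)) :
    (let ξ := (1 - 3 * θ ^ 2 - s) / (2 * θ ^ 2)
     θ ^ 3 * ξ ^ 2 + θ * (3 * θ ^ 2 - 1) * ξ + 2 * θ ^ 3 - 2 * θ + 1 = 0) ∧
    (let ξ := (1 - 3 * θ ^ 2 + s) / (2 * θ ^ 2)
     θ ^ 3 * ξ ^ 2 + θ * (3 * θ ^ 2 - 1) * ξ + 2 * θ ^ 3 - 2 * θ + 1 = 0) := by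
  constructor <;>
  · field_simp
    linear_combination hs

lemma two_lt_sos_smaller_root {θ : ℝ} (hθ0 : 0 < θ) (h3 : 3 * θ < 1) :
    2 < (1 - 3 * θ ^ 2 - Real.sqrt ((θ - 1) * (θ ^ 3 + θ ^ 2 + 3 * θ - 1))) / (2 * θ ^ 2) := by
  have h7 : 0 < 1 - 7 * θ ^ 2 := by nlinarith
  have hsq_gap : (θ - 1) * (θ ^ 3 + θ ^ 2 + 3 * θ - 1) < (1 - 7 * θ ^ 2) ^ 2 := by
    have hcubic : 0 < 12 * θ ^ 3 - 4 * θ + 1 := by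
      nlinarith [mul_nonneg (sq_nonneg (3 * θ - 1)) hθ0.le]
    nlinarith [mul_pos hθ0 hcubic]
  have hsqrt := (Real.sqrt_lt' h7).2 hsq_gap
  rw [lt_div_iff₀ (by positivity)]
  linarith

theorem sos_xi_roots_gt_two_general (θc' θ : ℝ)
    (hroot : θc' ^ 3 + θc' ^ 2 + 3 * θc' - 1 = 0)
    (hθ0 : 0 < θ) (hθ : θ < θc') :
    let ξ₁ : ℝ := (1 - 3 * θ ^ 2 - Real.sqrt ((θ - 1) * (θ ^ 3 + θ ^ 2 + 3 * θ - 1)))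
        / (2 * θ ^ 2)
    let ξ₂ : ℝ := (1 - 3 * θ ^ 2 + Real.sqrt ((θ - 1) * (θ ^ 3 + θ ^ 2 + 3 * θ - 1)))
        / (2 * θ ^ 2)
    (θ ^ 3 * ξ₁ ^ 2 + θ * (3 * θ ^ 2 - 1) * ξ₁ + 2 * θ ^ 3 - 2 * θ + 1 = 0) ∧
    (θ ^ 3 * ξ₂ ^ 2 + θ * (3 * θ ^ 2 - 1) * ξ₂ + 2 * θ ^ 3 - 2 * θ + 1 = 0) ∧
    2 < ξ₁ ∧ ξ₁ < ξ₂ := by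
  intro ξ₁ ξ₂
  have hc : θ ^ 3 + θ ^ 2 + 3 * θ - 1 < 0 := hroot ▸ strictMono_sos_cubic hθ
  have h3 := three_mul_lt_one_of_sos_cubic_neg hθ0 hc
  have hD : 0 < (θ - 1) * (θ ^ 3 + θ ^ 2 + 3 * θ - 1) :=
    mul_pos_of_neg_of_neg (by linarith) hc
  obtain ⟨hξ₁, hξ₂⟩ := sos_quadratic_roots hθ0.ne' (Real.sq_sqrt hD.le)
  refine ⟨hξ₁, hξ₂, two_lt_sos_smaller_root hθ0 h3, ?_⟩
  exact div_lt_div_of_pos_right (by linarith [Real.sqrt_pos.2 hD]) (by positivity)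

/-- If `θ_c'` is the unique real root of `t³ + t² + 3t - 1 = 0` and
`0 < θ < θ_c'`, then the two roots `ξ₁ ≤ ξ₂` of the quadratic
`θ³ξ² + θ(3θ² - 1)ξ + 2θ³ - 2θ + 1 = 0` satisfy `2 < ξ₁ < ξ₂`. -/
theorem sos_xi_roots_gt_two (θc' θ : ℝ)
    (hroot : θc' ^ 3 + θc' ^ 2 + 3 * θc' - 1 = 0)
    (huniq : ∀ t : ℝ, t ^ 3 + t ^ 2 + 3 * t - 1 = 0 → t = θc')
    (hθ0 : 0 < θ) (hθ : θ < θc') :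
    let ξ₁ : ℝ := (1 - 3 * θ ^ 2 - Real.sqrt ((θ - 1) * (θ ^ 3 + θ ^ 2 + 3 * θ - 1)))
        / (2 * θ ^ 2)
    let ξ₂ : ℝ := (1 - 3 * θ ^ 2 + Real.sqrt ((θ - 1) * (θ ^ 3 + θ ^ 2 + 3 * θ - 1)))
        / (2 * θ ^ 2)
    (θ ^ 3 * ξ₁ ^ 2 + θ * (3 * θ ^ 2 - 1) * ξ₁ + 2 * θ ^ 3 - 2 * θ + 1 = 0) ∧
    (θ ^ 3 * ξ₂ ^ 2 + θ * (3 * θ ^ 2 - 1) * ξ₂ + 2 * θ ^ 3 - 2 * θ + 1 = 0) ∧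
    2 < ξ₁ ∧ ξ₁ < ξ₂ :=
  sos_xi_roots_gt_two_general θc' θ hroot hθ0 hθ
end

section
/- Let θ_c' be the unique real root of t³ + t² + 3t − 1 = 0, let 0 < θ ≤ θ_c', and let x > 0 be such that ξ = x + 1/x satisfies the quadratic θ³ξ² + θ(3θ² − 1)ξ + 2θ³ − 2θ + 1 = 0. Then (1 − θ²)x − θ²(x² + 1) > 0. -/
/-! Writing `ξ = x + 1/x`, one has `(1 - θ²)x - θ²(x² + 1) = x (1 - θ² - θ²ξ)`, and the quadratic
`q_θ(ξ) = θ³ξ² + θ(3θ² - 1)ξ + 2θ³ - 2θ + 1` satisfies `θ (ξ + 2) (1 - θ² - θ²ξ) = 1 - q_θ(ξ)`.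
At a root of `q_θ` the product is `1`, and since `θ > 0` and `ξ + 2 > 0` the last factor is
positive. -/

def sosQuadratic (θ ξ : ℝ) : ℝ :=
  θ ^ 3 * ξ ^ 2 + θ * (3 * θ ^ 2 - 1) * ξ + 2 * θ ^ 3 - 2 * θ + 1

theorem mul_add_two_mul_eq_one_sub_sosQuadratic (θ ξ : ℝ) :
    θ * (ξ + 2) * (1 - θ ^ 2 - θ ^ 2 * ξ) = 1 - sosQuadratic θ ξ := by
  unfold sosQuadratic
  ring

theorem pos_of_sosQuadratic_eq_zero {θ ξ : ℝ} (hθ : 0 < θ) (hξ : -2 < ξ)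
    (hroot : sosQuadratic θ ξ = 0) : 0 < 1 - θ ^ 2 - θ ^ 2 * ξ := by
  have hprod : θ * (ξ + 2) * (1 - θ ^ 2 - θ ^ 2 * ξ) = 1 := by
    rw [mul_add_two_mul_eq_one_sub_sosQuadratic, hroot, sub_zero]
  have hfactor : 0 < θ * (ξ + 2) := mul_pos hθ (by linarith)
  exact pos_of_mul_pos_right (hprod.symm ▸ one_pos) hfactor.le

theorem sos_y_squared_positive_general (θ x : ℝ)
    (hθ0 : 0 < θ) (hx : 0 < x)
    (hξ : θ ^ 3 * (x + 1 / x) ^ 2 + θ * (3 * θ ^ 2 - 1) * (x + 1 / x)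
        + 2 * θ ^ 3 - 2 * θ + 1 = 0) :
    0 < (1 - θ ^ 2) * x - θ ^ 2 * (x ^ 2 + 1) := by
  have hξ_pos : 0 < x + 1 / x := by positivity
  have hfactor := pos_of_sosQuadratic_eq_zero hθ0 (by linarith) hξ
  have hrewrite : (1 - θ ^ 2) * x - θ ^ 2 * (x ^ 2 + 1)
      = x * (1 - θ ^ 2 - θ ^ 2 * (x + 1 / x)) := by
    field_simp
  rw [hrewrite]
  exact mul_pos hx hfactor

/-- If `θ_c'` is the unique real root of `t³ + t² + 3t - 1 = 0`,
`0 < θ ≤ θ_c'`, and `x > 0` is such that `ξ = x + 1/x` solves the quadratic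
`θ³ξ² + θ(3θ² - 1)ξ + 2θ³ - 2θ + 1 = 0`, then `(1 - θ²)x - θ²(x² + 1) > 0`. -/
theorem sos_y_squared_positive (θc' θ x : ℝ)
    (hroot : θc' ^ 3 + θc' ^ 2 + 3 * θc' - 1 = 0)
    (huniq : ∀ t : ℝ, t ^ 3 + t ^ 2 + 3 * t - 1 = 0 → t = θc')
    (hθ0 : 0 < θ) (hθ : θ ≤ θc') (hx : 0 < x)
    (hξ : θ ^ 3 * (x + 1 / x) ^ 2 + θ * (3 * θ ^ 2 - 1) * (x + 1 / x)
        + 2 * θ ^ 3 - 2 * θ + 1 = 0) :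
    0 < (1 - θ ^ 2) * x - θ ^ 2 * (x ^ 2 + 1) :=
  sos_y_squared_positive_general θ x hθ0 hx hξ
end

section
/- Let θ_c' be the unique real root of t³ + t² + 3t − 1 = 0 and let 0 < θ ≤ θ_c'. Let x > 0 be such that ξ = x + 1/x satisfies θ³ξ² + θ(3θ² − 1)ξ + 2θ³ − 2θ + 1 = 0, and set y = √(((1 − θ²)x − θ²(x² + 1))/θ). Then (x, y) is a solution of the boundary-law system x = (x² + θy² + θ²)/(θ²x² + θy² + 1) and y = (θx² + y² + θ)/(θ²x² + θy² + 1), and x ≠ 1. -/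
/-!
Clearing denominators in the quadratic for `ξ = x + 1/x` gives a quartic `Q(θ, x) = 0` which
says exactly that `θ R (x + 1)² = x²`, where `R = (1 - θ²)x - θ²(x² + 1)` is the radicand's
numerator. Hence `y = x / (θ (x + 1))`, and with `θ y² = R` both boundary-law equations reduce to
identities: the common denominator becomes `(1 - θ²)(x + 1)`. Finally `Q(θ, 1) = 12θ³ - 4θ + 1`
has no positive root, so `x ≠ 1`.
-/

/-- `x²` times the left-hand side of `θ³ξ² + θ(3θ² - 1)ξ + 2θ³ - 2θ + 1 = 0` at `ξ = x + 1/x`. -/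
def sosQuartic (θ x : ℝ) : ℝ :=
  θ ^ 3 * (x ^ 2 + 1) ^ 2 + θ * (3 * θ ^ 2 - 1) * x * (x ^ 2 + 1) + (2 * θ ^ 3 - 2 * θ + 1) * x ^ 2

lemma sosQuartic_eq_zero {θ x : ℝ} (hx : x ≠ 0)
    (hξ : θ ^ 3 * (x + 1 / x) ^ 2 + θ * (3 * θ ^ 2 - 1) * (x + 1 / x)
        + 2 * θ ^ 3 - 2 * θ + 1 = 0) :
    sosQuartic θ x = 0 := by
  have h : sosQuartic θ x = x ^ 2 * (θ ^ 3 * (x + 1 / x) ^ 2 + θ * (3 * θ ^ 2 - 1) * (x + 1 / x)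
      + 2 * θ ^ 3 - 2 * θ + 1) := by
    unfold sosQuartic
    field_simp
    ring
  rw [h, hξ, mul_zero]

lemma sosQuartic_one_pos {θ : ℝ} (hθ : 0 ≤ θ) : 0 < sosQuartic θ 1 := by
  unfold sosQuartic
  nlinarith [mul_nonneg hθ (sq_nonneg (θ - 1 / 3)), sq_nonneg θ]

lemma mul_radicand_mul_sq_eq_sq_of_sosQuartic_eq_zero {θ x : ℝ} (hQ : sosQuartic θ x = 0) :
    θ * ((1 - θ ^ 2) * x - θ ^ 2 * (x ^ 2 + 1)) * (x + 1) ^ 2 = x ^ 2 := by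
  unfold sosQuartic at hQ
  linear_combination -hQ

lemma sos_boundary_law_of_mul_sq_eq {θ x y : ℝ} (hθ : 0 < θ)
    (hy2 : θ * y ^ 2 = (1 - θ ^ 2) * x - θ ^ 2 * (x ^ 2 + 1)) (hy : θ * y * (x + 1) = x) :
    x = (x ^ 2 + θ * y ^ 2 + θ ^ 2) / (θ ^ 2 * x ^ 2 + θ * y ^ 2 + 1) ∧
    y = (θ * x ^ 2 + y ^ 2 + θ) / (θ ^ 2 * x ^ 2 + θ * y ^ 2 + 1) := by
  have hD : θ ^ 2 * x ^ 2 + θ * y ^ 2 + 1 ≠ 0 := by positivity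
  constructor
  · rw [eq_div_iff hD]
    linear_combination (x - 1) * hy2
  · rw [eq_div_iff hD]
    refine mul_left_cancel₀ hθ.ne' ?_
    linear_combination (θ * y - 1) * hy2 + (1 - θ ^ 2) * hy

theorem sos_nonsymmetric_solutions_general (θ x : ℝ)
    (hθ0 : 0 < θ) (hx : 0 < x)
    (hξ : θ ^ 3 * (x + 1 / x) ^ 2 + θ * (3 * θ ^ 2 - 1) * (x + 1 / x)
        + 2 * θ ^ 3 - 2 * θ + 1 = 0) :
    let y : ℝ := Real.sqrt (((1 - θ ^ 2) * x - θ ^ 2 * (x ^ 2 + 1)) / θ)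
    x = (x ^ 2 + θ * y ^ 2 + θ ^ 2) / (θ ^ 2 * x ^ 2 + θ * y ^ 2 + 1) ∧
    y = (θ * x ^ 2 + y ^ 2 + θ) / (θ ^ 2 * x ^ 2 + θ * y ^ 2 + 1) ∧
    x ≠ 1 := by
  intro y
  have hQ := sosQuartic_eq_zero hx.ne' hξ
  have hsq := mul_radicand_mul_sq_eq_sq_of_sosQuartic_eq_zero hQ
  have hradicand : ((1 - θ ^ 2) * x - θ ^ 2 * (x ^ 2 + 1)) / θ = (x / (θ * (x + 1))) ^ 2 := by
    field_simp
    linear_combination hsq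
  have hy : y = x / (θ * (x + 1)) := by
    rw [show y = Real.sqrt _ from rfl, hradicand, Real.sqrt_sq (by positivity)]
  have hy2 : θ * y ^ 2 = (1 - θ ^ 2) * x - θ ^ 2 * (x ^ 2 + 1) := by
    rw [hy, ← hradicand]
    field_simp
  have hyx : θ * y * (x + 1) = x := by
    rw [hy]
    field_simp
  obtain ⟨hfirst, hsecond⟩ := sos_boundary_law_of_mul_sq_eq hθ0 hy2 hyx
  refine ⟨hfirst, hsecond, ?_⟩
  rintro rfl
  exact (sosQuartic_one_pos hθ0.le).ne' hQ

/-- If `θ_c'` is the unique real root of `t³ + t² + 3t - 1 = 0`,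
`0 < θ ≤ θ_c'`, `x > 0` is such that `ξ = x + 1/x` solves the quadratic
`θ³ξ² + θ(3θ² - 1)ξ + 2θ³ - 2θ + 1 = 0`, and `y = √(((1 - θ²)x - θ²(x² + 1))/θ)`,
then `(x, y)` solves the boundary-law system and `x ≠ 1`. -/
theorem sos_nonsymmetric_solutions (θc' θ x : ℝ)
    (hroot : θc' ^ 3 + θc' ^ 2 + 3 * θc' - 1 = 0)
    (huniq : ∀ t : ℝ, t ^ 3 + t ^ 2 + 3 * t - 1 = 0 → t = θc')
    (hθ0 : 0 < θ) (hθ : θ ≤ θc') (hx : 0 < x)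
    (hξ : θ ^ 3 * (x + 1 / x) ^ 2 + θ * (3 * θ ^ 2 - 1) * (x + 1 / x)
        + 2 * θ ^ 3 - 2 * θ + 1 = 0) :
    let y : ℝ := Real.sqrt (((1 - θ ^ 2) * x - θ ^ 2 * (x ^ 2 + 1)) / θ)
    x = (x ^ 2 + θ * y ^ 2 + θ ^ 2) / (θ ^ 2 * x ^ 2 + θ * y ^ 2 + 1) ∧
    y = (θ * x ^ 2 + y ^ 2 + θ) / (θ ^ 2 * x ^ 2 + θ * y ^ 2 + 1) ∧
    x ≠ 1 :=
  sos_nonsymmetric_solutions_general θ x hθ0 hx hξ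
end

section
/- Let θ > 0 and let x, y > 0 solve the boundary-law system x = (x² + θy² + θ²)/(θ²x² + θy² + 1), y = (θx² + y² + θ)/(θ²x² + θy² + 1). Set Z = θ²x² + θy² + 1 and let P be the 3×3 matrix (1/Z)·[[x, θy²/x, θ²/x], [θx²/y, y, θ/y], [θ²x², θy², 1]]. Then the eigenvalues of P are 1 together with the two roots λ of the quadratic Zx(1 − λ)² + x(1 + x + y − 3Z)(1 − λ) + θ²(1 + x³ + y³) = 0. -/
/-- For a positive solution `(x, y)` of the boundary-law system, the
eigenvalues of the transition matrix `P = (1/Z)·[[x, θy²/x, θ²/x], [θx²/y, y, θ/y],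
[θ²x², θy², 1]]` (i.e. the real roots of its characteristic polynomial) are `1` together
with the roots `λ` of `Zx(1-λ)² + x(1+x+y-3Z)(1-λ) + θ²(1+x³+y³) = 0`. -/
theorem sos_transition_matrix_eigenvalues (θ x y : ℝ) (hθ : 0 < θ) (hx : 0 < x) (hy : 0 < y)
    (h1 : x = (x ^ 2 + θ * y ^ 2 + θ ^ 2) / (θ ^ 2 * x ^ 2 + θ * y ^ 2 + 1))
    (h2 : y = (θ * x ^ 2 + y ^ 2 + θ) / (θ ^ 2 * x ^ 2 + θ * y ^ 2 + 1)) :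
    let Z : ℝ := θ ^ 2 * x ^ 2 + θ * y ^ 2 + 1
    let P : Matrix (Fin 3) (Fin 3) ℝ :=
      (1 / Z) • !![x, θ * y ^ 2 / x, θ ^ 2 / x;
                   θ * x ^ 2 / y, y, θ / y;
                   θ ^ 2 * x ^ 2, θ * y ^ 2, 1]
    ∀ lam : ℝ, (Matrix.charpoly P).IsRoot lam ↔
      (lam = 1 ∨
        Z * x * (1 - lam) ^ 2 + x * (1 + x + y - 3 * Z) * (1 - lam)
          + θ ^ 2 * (1 + x ^ 3 + y ^ 3) = 0) := by
  intro Z P lam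
  have hZ : (0:ℝ) < θ ^ 2 * x ^ 2 + θ * y ^ 2 + 1 := by positivity
  have hZ' : Z ≠ 0 := ne_of_gt hZ
  have hc1 : x * (θ ^ 2 * x ^ 2 + θ * y ^ 2 + 1) = x ^ 2 + θ * y ^ 2 + θ ^ 2 := by
    field_simp at h1; linarith [h1]
  have hc2 : y * (θ ^ 2 * x ^ 2 + θ * y ^ 2 + 1) = θ * x ^ 2 + y ^ 2 + θ := by
    field_simp at h2; linarith [h2]
  have e1 : (lam - Z⁻¹ * x) * (lam - Z⁻¹ * y) * (lam - Z⁻¹) * (x * y * Z ^ 3)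
      = (Z * lam - x) * (Z * lam - y) * (Z * lam - 1) * (x * y) := by
    field_simp
  have e2 : (lam - Z⁻¹ * x) * (Z⁻¹ * (θ / y)) * (Z⁻¹ * (θ * y ^ 2)) * (x * y * Z ^ 3)
      = (Z * lam - x) * θ ^ 2 * y ^ 2 * x := by
    field_simp
  have e3 : Z⁻¹ * (θ * y ^ 2 / x) * (Z⁻¹ * (θ * x ^ 2 / y)) * (lam - Z⁻¹) * (x * y * Z ^ 3)
      = θ ^ 2 * x ^ 2 * y ^ 2 * (Z * lam - 1) := by
    field_simp
  have e4 : Z⁻¹ * (θ * y ^ 2 / x) * (Z⁻¹ * (θ / y)) * (Z⁻¹ * (θ ^ 2 * x ^ 2)) * (x * y * Z ^ 3)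
      = θ ^ 4 * x ^ 2 * y ^ 2 := by
    field_simp
  have e5 : Z⁻¹ * (θ ^ 2 / x) * (Z⁻¹ * (θ * x ^ 2 / y)) * (Z⁻¹ * (θ * y ^ 2)) * (x * y * Z ^ 3)
      = θ ^ 4 * x ^ 2 * y ^ 2 := by
    field_simp
  have e6 : Z⁻¹ * (θ ^ 2 / x) * (lam - Z⁻¹ * y) * (Z⁻¹ * (θ ^ 2 * x ^ 2)) * (x * y * Z ^ 3)
      = θ ^ 4 * x ^ 2 * y * (Z * lam - y) := by
    field_simp
  have key : ((lam - Z⁻¹ * x) * (lam - Z⁻¹ * y) * (lam - Z⁻¹) -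
        (lam - Z⁻¹ * x) * (Z⁻¹ * (θ / y)) * (Z⁻¹ * (θ * y ^ 2)) -
        Z⁻¹ * (θ * y ^ 2 / x) * (Z⁻¹ * (θ * x ^ 2 / y)) * (lam - Z⁻¹) +
        -(Z⁻¹ * (θ * y ^ 2 / x) * (Z⁻¹ * (θ / y)) * (Z⁻¹ * (θ ^ 2 * x ^ 2))) +
        -(Z⁻¹ * (θ ^ 2 / x) * (Z⁻¹ * (θ * x ^ 2 / y)) * (Z⁻¹ * (θ * y ^ 2))) -
        Z⁻¹ * (θ ^ 2 / x) * (lam - Z⁻¹ * y) * (Z⁻¹ * (θ ^ 2 * x ^ 2))) * (x * y * Z ^ 3)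
      = (lam - 1) * (y * Z ^ 2) *
        (Z * x * (1 - lam) ^ 2 + x * (1 + x + y - 3 * Z) * (1 - lam)
          + θ ^ 2 * (1 + x ^ 3 + y ^ 3)) := by
    linear_combination e1 - e2 - e3 - e4 - e5 - e6
      + (-y + y*lam + y ^ 2 + -y ^ 2*lam + (-3)*θ*y ^ 3 + (4)*θ*y ^ 3*lam + θ*y ^ 4 + (-2)*θ*y ^ 4*lam + -θ ^ 2*y ^ 2*lam + (-2)*θ ^ 2*y ^ 5 + (3)*θ ^ 2*y ^ 5*lam + (-2)*θ ^ 2*x ^ 2*y + (3)*θ ^ 2*x ^ 2*y*lam + θ ^ 2*x ^ 2*y ^ 2 + (-2)*θ ^ 2*x ^ 2*y ^ 2*lam + (-3)*θ ^ 3*x ^ 2*y ^ 3 + (5)*θ ^ 3*x ^ 2*y ^ 3*lam + -θ ^ 4*x ^ 4*y + (2)*θ ^ 4*x ^ 4*y*lam) * hc1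
      + (-θ*y ^ 2 + θ*y ^ 2*lam + -θ*x ^ 2*y ^ 2 + θ*x ^ 2*y ^ 2*lam + θ ^ 2*y ^ 3 + -θ ^ 2*y ^ 3*lam + -θ ^ 2*y ^ 4 + (2)*θ ^ 2*y ^ 4*lam + θ ^ 3*y ^ 2*lam + θ ^ 3*y ^ 5 + -θ ^ 3*y ^ 5*lam + θ ^ 3*x ^ 2*y ^ 2*lam + θ ^ 4*x ^ 2*y ^ 3 + -θ ^ 4*x ^ 2*y ^ 3*lam) * hc2
  have hxyZ : x * y * Z ^ 3 ≠ 0 := by positivity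
  rw [Polynomial.IsRoot, Matrix.charpoly, Matrix.det_fin_three]
  simp only [Matrix.charmatrix_apply, Matrix.diagonal_apply, Matrix.smul_apply,
    Matrix.cons_val', Matrix.cons_val_zero, Matrix.cons_val_one, Matrix.head_cons,
    Matrix.empty_val', Matrix.cons_val_fin_one, Matrix.head_fin_const,
    Matrix.cons_val_two, Matrix.tail_cons, Matrix.of_apply, smul_eq_mul,
    Polynomial.eval_sub, Polynomial.eval_mul, Polynomial.eval_add, Polynomial.eval_neg,
    Polynomial.eval_X, Polynomial.eval_C, Polynomial.eval_zero, P, Matrix.smul_apply,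
    Matrix.cons_val_zero, Matrix.cons_val_one, Matrix.head_cons, smul_eq_mul]
  norm_num [Fin.ext_iff]
  constructor
  · intro h
    have h4 : (lam - 1) * (y * Z ^ 2) *
        (Z * x * (1 - lam) ^ 2 + x * (1 + x + y - 3 * Z) * (1 - lam)
          + θ ^ 2 * (1 + x ^ 3 + y ^ 3)) = 0 := by
      rw [← key, h, zero_mul]
    rcases mul_eq_zero.mp h4 with h5 | h5
    · rcases mul_eq_zero.mp h5 with h6 | h6
      · left; linarith [sub_eq_zero.mp h6]
      · exact absurd h6 (by positivity)
    · right; exact h5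
  · intro h
    have h4 : ((lam - Z⁻¹ * x) * (lam - Z⁻¹ * y) * (lam - Z⁻¹) -
        (lam - Z⁻¹ * x) * (Z⁻¹ * (θ / y)) * (Z⁻¹ * (θ * y ^ 2)) -
        Z⁻¹ * (θ * y ^ 2 / x) * (Z⁻¹ * (θ * x ^ 2 / y)) * (lam - Z⁻¹) +
        -(Z⁻¹ * (θ * y ^ 2 / x) * (Z⁻¹ * (θ / y)) * (Z⁻¹ * (θ ^ 2 * x ^ 2))) +
        -(Z⁻¹ * (θ ^ 2 / x) * (Z⁻¹ * (θ * x ^ 2 / y)) * (Z⁻¹ * (θ * y ^ 2))) -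
        Z⁻¹ * (θ ^ 2 / x) * (lam - Z⁻¹ * y) * (Z⁻¹ * (θ ^ 2 * x ^ 2))) * (x * y * Z ^ 3) = 0 := by
      rw [key]
      rcases h with h | h
      · rw [h]; ring
      · rw [h, mul_zero]
    exact (mul_eq_zero.mp h4).resolve_right hxyZ
end

section
/- Let θ > 1, x, y > 0, and let p₀, p₁, p₂ ≥ 0 with p₀ + p₁ + p₂ = 1. With pᵗ(s) defined as the normalized vectors proportional to (x²p₀, θy²p₁, θ²p₂) for t = 0, (θx²p₀, y²p₁, θp₂) for t = 1, and (θ²x²p₀, θy²p₁, p₂) for t = 2, the following hold: (a) p⁰(0) ≤ p¹(0) ≤ p²(0); (b) if p₂ ≥ x²p₀ then p¹(1) ≤ p⁰(1) ≤ p²(1), while if p₂ ≤ x²p₀ then p¹(1) ≤ p²(1) ≤ p⁰(1); (c) p²(2) ≤ p¹(2) ≤ p⁰(2). -/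
/-- Monotonicity of the conditional single-site distributions `pᵗ(s)` of the
3-state SOS model for `θ > 1`:
(a) `p⁰(0) ≤ p¹(0) ≤ p²(0)`;
(b) `p¹(1) ≤ p⁰(1) ≤ p²(1)` if `p₂ ≥ x²p₀`, and `p¹(1) ≤ p²(1) ≤ p⁰(1)` if `p₂ ≤ x²p₀`;
(c) `p²(2) ≤ p¹(2) ≤ p⁰(2)`. -/
theorem sos_conditional_monotonicity_theta_gt_one
    (θ x y p₀ p₁ p₂ : ℝ) (hθ : 1 < θ) (hx : 0 < x) (hy : 0 < y)
    (hp₀ : 0 ≤ p₀) (hp₁ : 0 ≤ p₁) (hp₂ : 0 ≤ p₂) (hsum : p₀ + p₁ + p₂ = 1) :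
    let D₀ : ℝ := x ^ 2 * p₀ + θ * y ^ 2 * p₁ + θ ^ 2 * p₂
    let D₁ : ℝ := θ * x ^ 2 * p₀ + y ^ 2 * p₁ + θ * p₂
    let D₂ : ℝ := θ ^ 2 * x ^ 2 * p₀ + θ * y ^ 2 * p₁ + p₂
    -- (a)
    (x ^ 2 * p₀ / D₀ ≤ θ * x ^ 2 * p₀ / D₁ ∧
      θ * x ^ 2 * p₀ / D₁ ≤ θ ^ 2 * x ^ 2 * p₀ / D₂) ∧
    -- (b)
    ((x ^ 2 * p₀ ≤ p₂ →
        y ^ 2 * p₁ / D₁ ≤ θ * y ^ 2 * p₁ / D₀ ∧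
        θ * y ^ 2 * p₁ / D₀ ≤ θ * y ^ 2 * p₁ / D₂) ∧
     (p₂ ≤ x ^ 2 * p₀ →
        y ^ 2 * p₁ / D₁ ≤ θ * y ^ 2 * p₁ / D₂ ∧
        θ * y ^ 2 * p₁ / D₂ ≤ θ * y ^ 2 * p₁ / D₀)) ∧
    -- (c)
    (p₂ / D₂ ≤ θ * p₂ / D₁ ∧ θ * p₂ / D₁ ≤ θ ^ 2 * p₂ / D₀) := by
  intro D₀ D₁ D₂
  have hθ0 : (0:ℝ) < θ := lt_trans one_pos hθ
  have hθ2 : (0:ℝ) ≤ θ ^ 2 - 1 := by nlinarith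
  have hx2 : (0:ℝ) < x ^ 2 := by positivity
  have hy2 : (0:ℝ) < y ^ 2 := by positivity
  have ha : 0 ≤ x ^ 2 * p₀ := mul_nonneg hx2.le hp₀
  have hb : 0 ≤ y ^ 2 * p₁ := mul_nonneg hy2.le hp₁
  have hpos : 0 < p₀ ∨ 0 < p₁ ∨ 0 < p₂ := by
    by_contra hc
    push_neg at hc
    obtain ⟨h0, h1, h2⟩ := hc
    linarith
  have hθsq : (0:ℝ) < θ ^ 2 := by positivity
  have hD₀ : 0 < D₀ := by
    show 0 < x ^ 2 * p₀ + θ * y ^ 2 * p₁ + θ ^ 2 * p₂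
    have t1 := mul_nonneg (mul_nonneg hθ0.le hy2.le) hp₁
    have t2 := mul_nonneg hθsq.le hp₂
    rcases hpos with h | h | h
    · nlinarith [mul_pos hx2 h]
    · nlinarith [mul_pos (mul_pos hθ0 hy2) h]
    · nlinarith [mul_pos hθsq h]
  have hD₁ : 0 < D₁ := by
    show 0 < θ * x ^ 2 * p₀ + y ^ 2 * p₁ + θ * p₂
    have t1 := mul_nonneg (mul_nonneg hθ0.le hx2.le) hp₀
    have t2 := mul_nonneg hθ0.le hp₂
    rcases hpos with h | h | h
    · nlinarith [mul_pos (mul_pos hθ0 hx2) h]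
    · nlinarith [mul_pos hy2 h]
    · nlinarith [mul_pos hθ0 h]
  have hD₂ : 0 < D₂ := by
    show 0 < θ ^ 2 * x ^ 2 * p₀ + θ * y ^ 2 * p₁ + p₂
    have t1 := mul_nonneg (mul_nonneg hθsq.le hx2.le) hp₀
    have t2 := mul_nonneg (mul_nonneg hθ0.le hy2.le) hp₁
    rcases hpos with h | h | h
    · nlinarith [mul_pos (mul_pos hθsq hx2) h]
    · nlinarith [mul_pos (mul_pos hθ0 hy2) h]
    · linarith
  have key : ∀ a b c d : ℝ, 0 < c → 0 < d → a * d ≤ b * c → a / c ≤ b / d := by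
    intro a b c d hc hd h
    rw [div_le_div_iff₀ hc hd]; exact h
  refine ⟨⟨?_, ?_⟩, ⟨fun h => ⟨?_, ?_⟩, fun h => ⟨?_, ?_⟩⟩, ⟨?_, ?_⟩⟩
  · apply key _ _ _ _ hD₀ hD₁
    have hid : θ * x ^ 2 * p₀ * D₀ - x ^ 2 * p₀ * D₁ =
        (x ^ 2 * p₀) * (y ^ 2 * p₁) * (θ ^ 2 - 1) +
        (x ^ 2 * p₀) * p₂ * (θ * (θ ^ 2 - 1)) := by
      show θ * x ^ 2 * p₀ * (x ^ 2 * p₀ + θ * y ^ 2 * p₁ + θ ^ 2 * p₂) -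
        x ^ 2 * p₀ * (θ * x ^ 2 * p₀ + y ^ 2 * p₁ + θ * p₂) = _
      ring
    linarith [hid, mul_nonneg (mul_nonneg ha hb) hθ2,
      mul_nonneg (mul_nonneg ha hp₂) (mul_nonneg hθ0.le hθ2)]
  · apply key _ _ _ _ hD₁ hD₂
    have hid : θ ^ 2 * x ^ 2 * p₀ * D₁ - θ * x ^ 2 * p₀ * D₂ =
        (θ * (x ^ 2 * p₀)) * p₂ * (θ ^ 2 - 1) := by
      show θ ^ 2 * x ^ 2 * p₀ * (θ * x ^ 2 * p₀ + y ^ 2 * p₁ + θ * p₂) -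
        θ * x ^ 2 * p₀ * (θ ^ 2 * x ^ 2 * p₀ + θ * y ^ 2 * p₁ + p₂) = _
      ring
    linarith [hid, mul_nonneg (mul_nonneg (mul_nonneg hθ0.le ha) hp₂) hθ2]
  · apply key _ _ _ _ hD₁ hD₀
    have hid : θ * y ^ 2 * p₁ * D₁ - y ^ 2 * p₁ * D₀ =
        (y ^ 2 * p₁) * (x ^ 2 * p₀) * (θ ^ 2 - 1) := by
      show θ * y ^ 2 * p₁ * (θ * x ^ 2 * p₀ + y ^ 2 * p₁ + θ * p₂) -
        y ^ 2 * p₁ * (x ^ 2 * p₀ + θ * y ^ 2 * p₁ + θ ^ 2 * p₂) = _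
      ring
    linarith [hid, mul_nonneg (mul_nonneg hb ha) hθ2]
  · apply key _ _ _ _ hD₀ hD₂
    have hid : θ * y ^ 2 * p₁ * D₀ - θ * y ^ 2 * p₁ * D₂ =
        (θ * (y ^ 2 * p₁)) * ((p₂ - x ^ 2 * p₀) * (θ ^ 2 - 1)) := by
      show θ * y ^ 2 * p₁ * (x ^ 2 * p₀ + θ * y ^ 2 * p₁ + θ ^ 2 * p₂) -
        θ * y ^ 2 * p₁ * (θ ^ 2 * x ^ 2 * p₀ + θ * y ^ 2 * p₁ + p₂) = _
      ring
    linarith [hid, mul_nonneg (mul_nonneg hθ0.le hb)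
      (mul_nonneg (sub_nonneg.mpr h) hθ2)]
  · apply key _ _ _ _ hD₁ hD₂
    have hid : θ * y ^ 2 * p₁ * D₁ - y ^ 2 * p₁ * D₂ =
        (y ^ 2 * p₁) * p₂ * (θ ^ 2 - 1) := by
      show θ * y ^ 2 * p₁ * (θ * x ^ 2 * p₀ + y ^ 2 * p₁ + θ * p₂) -
        y ^ 2 * p₁ * (θ ^ 2 * x ^ 2 * p₀ + θ * y ^ 2 * p₁ + p₂) = _
      ring
    linarith [hid, mul_nonneg (mul_nonneg hb hp₂) hθ2]
  · apply key _ _ _ _ hD₂ hD₀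
    have hid : θ * y ^ 2 * p₁ * D₂ - θ * y ^ 2 * p₁ * D₀ =
        (θ * (y ^ 2 * p₁)) * ((x ^ 2 * p₀ - p₂) * (θ ^ 2 - 1)) := by
      show θ * y ^ 2 * p₁ * (θ ^ 2 * x ^ 2 * p₀ + θ * y ^ 2 * p₁ + p₂) -
        θ * y ^ 2 * p₁ * (x ^ 2 * p₀ + θ * y ^ 2 * p₁ + θ ^ 2 * p₂) = _
      ring
    linarith [hid, mul_nonneg (mul_nonneg hθ0.le hb)
      (mul_nonneg (sub_nonneg.mpr h) hθ2)]
  · apply key _ _ _ _ hD₂ hD₁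
    have hid : θ * p₂ * D₂ - p₂ * D₁ =
        p₂ * (x ^ 2 * p₀) * (θ * (θ ^ 2 - 1)) + p₂ * (y ^ 2 * p₁) * (θ ^ 2 - 1) := by
      show θ * p₂ * (θ ^ 2 * x ^ 2 * p₀ + θ * y ^ 2 * p₁ + p₂) -
        p₂ * (θ * x ^ 2 * p₀ + y ^ 2 * p₁ + θ * p₂) = _
      ring
    linarith [hid, mul_nonneg (mul_nonneg hp₂ ha) (mul_nonneg hθ0.le hθ2),
      mul_nonneg (mul_nonneg hp₂ hb) hθ2]
  · apply key _ _ _ _ hD₁ hD₀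
    have hid : θ ^ 2 * p₂ * D₁ - θ * p₂ * D₀ =
        (θ * p₂) * (x ^ 2 * p₀) * (θ ^ 2 - 1) := by
      show θ ^ 2 * p₂ * (θ * x ^ 2 * p₀ + y ^ 2 * p₁ + θ * p₂) -
        θ * p₂ * (x ^ 2 * p₀ + θ * y ^ 2 * p₁ + θ ^ 2 * p₂) = _
      ring
    linarith [hid, mul_nonneg (mul_nonneg (mul_nonneg hθ0.le hp₂) ha) hθ2]
end

section
/- Let θ > 0, θ ≠ 1, x, y > 0, and let p₀, p₁, p₂ ≥ 0 with p₀ + p₁ + p₂ = 1. With pᵗ(s) defined as the normalized vectors proportional to (x²p₀, θy²p₁, θ²p₂) for t = 0, (θx²p₀, y²p₁, θp₂) for t = 1, and (θ²x²p₀, θy²p₁, p₂) for t = 2, one has max over i, j, k ∈ {0, 1, 2} of |pⁱ(k) − pʲ(k)| = max{ |p⁰(0) − p²(0)|, |p²(2) − p⁰(2)| }. -/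
/-!
Every row of the transition matrix is a probability vector, and for `θ ≤ 1` the entry in
column `0` decreases while the entry in column `2` increases as the parent spin runs through
`0, 1, 2` (the other way round for `θ ≥ 1`). Hence in columns `0` and `2` the largest
disagreement is between rows `0` and `2`. In column `1` the disagreement of two rows is minus the
sum of their disagreements in columns `0` and `2`, which have opposite signs, so it is dominated
by the larger of them.
-/

open Finset

theorem abs_add_le_max_of_mul_nonpos {α : Type*} [Field α] [LinearOrder α] [IsStrictOrderedRing α]
    {a b : α} (h : a * b ≤ 0) : |a + b| ≤ max |a| |b| := by
  rcases mul_nonpos_iff.1 h with ⟨ha, hb⟩ | ⟨ha, hb⟩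
  · rw [abs_of_nonneg ha, abs_of_nonpos hb]
    exact abs_le.2 ⟨by linarith [le_max_right a (-b)], by linarith [le_max_left a (-b)]⟩
  · rw [abs_of_nonpos ha, abs_of_nonneg hb]
    exact abs_le.2 ⟨by linarith [le_max_left (-a) b], by linarith [le_max_right (-a) b]⟩

theorem abs_sub_le_abs_sub_bot_top {α β : Type*} [Preorder α] [BoundedOrder α]
    [AddCommGroup β] [LinearOrder β] [IsOrderedAddMonoid β] {f : α → β}
    (hf : Monotone f ∨ Antitone f) (i j : α) : |f i - f j| ≤ |f ⊥ - f ⊤| := by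
  have hmem : ∀ k, f k ∈ Set.uIcc (f ⊤) (f ⊥) := fun k =>
    hf.elim (fun hf => Set.Icc_subset_uIcc' ⟨hf bot_le, hf le_top⟩)
      (fun hf => Set.Icc_subset_uIcc ⟨hf le_top, hf bot_le⟩)
  exact Set.abs_sub_le_of_uIcc_subset_uIcc (Set.uIcc_subset_uIcc (hmem j) (hmem i))

theorem sup'_abs_sub_eq_max_of_antitone_monotone {q : Fin 3 → Fin 3 → ℝ}
    (hrow : ∀ i, ∑ k, q i k = 1)
    (hcol : Antitone (q · 0) ∧ Monotone (q · 2) ∨ Monotone (q · 0) ∧ Antitone (q · 2)) :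
    univ.sup' univ_nonempty (fun w : Fin 3 × Fin 3 × Fin 3 => |q w.1 w.2.2 - q w.2.1 w.2.2|) =
      max |q 0 0 - q 2 0| |q 2 2 - q 0 2| := by
  have hanti : Antivary (q · 0) (q · 2) :=
    hcol.elim (fun h => h.1.antivary h.2) (fun h => h.1.antivary h.2)
  have hcol₀ : ∀ i j, |q i 0 - q j 0| ≤ |q 0 0 - q 2 0| :=
    abs_sub_le_abs_sub_bot_top (f := (q · 0)) (hcol.elim (Or.inr ·.1) (Or.inl ·.1))
  have hcol₂ : ∀ i j, |q i 2 - q j 2| ≤ |q 2 2 - q 0 2| := fun i j =>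
    (abs_sub_le_abs_sub_bot_top (f := (q · 2)) (hcol.elim (Or.inl ·.2) (Or.inr ·.2)) i j).trans_eq
      (abs_sub_comm _ _)
  have hbound : ∀ i j k, |q i k - q j k| ≤ max |q 0 0 - q 2 0| |q 2 2 - q 0 2| := by
    intro i j k
    fin_cases k
    · exact (hcol₀ i j).trans (le_max_left _ _)
    · have hcol₁ : q i 1 - q j 1 = -((q i 0 - q j 0) + (q i 2 - q j 2)) := by
        have hi := hrow i
        have hj := hrow j
        rw [Fin.sum_univ_three] at hi hj
        linarith
      rw [Fin.mk_one, hcol₁, abs_neg]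
      exact (abs_add_le_max_of_mul_nonpos (hanti.sub_mul_sub_nonpos j i)).trans
        (max_le_max (hcol₀ i j) (hcol₂ i j))
    · exact (hcol₂ i j).trans (le_max_right _ _)
  refine le_antisymm (sup'_le _ _ fun w _ => hbound _ _ _) (max_le ?_ ?_)
  · exact le_sup' (fun w : Fin 3 × Fin 3 × Fin 3 => |q w.1 w.2.2 - q w.2.1 w.2.2|)
      (mem_univ (0, 2, 0))
  · exact le_sup' (fun w : Fin 3 × Fin 3 × Fin 3 => |q w.1 w.2.2 - q w.2.1 w.2.2|)
      (mem_univ (2, 0, 2))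

noncomputable def sosPartition {n : ℕ} (θ : ℝ) (w : Fin n → ℝ) (t : Fin n) : ℝ :=
  ∑ r : Fin n, θ ^ Nat.dist t r * w r

/-- `sosTransition θ w t s` is `pᵗ(s)` for the free measure `p` when `w = (x²p₀, y²p₁, p₂)`. -/
noncomputable def sosTransition {n : ℕ} (θ : ℝ) (w : Fin n → ℝ) (t s : Fin n) : ℝ :=
  θ ^ Nat.dist t s * w s / sosPartition θ w t

section

variable {n : ℕ} {θ : ℝ} {w : Fin n → ℝ}

theorem sosPartition_pos (hθ : 0 < θ) (hw : 0 < w) (t : Fin n) : 0 < sosPartition θ w t := by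
  obtain ⟨hw₀, s, hs⟩ := Pi.lt_def.1 hw
  exact sum_pos' (fun r _ => mul_nonneg (pow_pos hθ _).le (hw₀ r))
    ⟨s, mem_univ s, mul_pos (pow_pos hθ _) hs⟩

theorem sum_sosTransition (hθ : 0 < θ) (hw : 0 < w) (t : Fin n) :
    ∑ s, sosTransition θ w t s = 1 := by
  simp_rw [sosTransition, ← sum_div]
  exact div_self (sosPartition_pos hθ hw t).ne'

end

theorem sosTransition_antitone_monotone {θ : ℝ} {w : Fin 3 → ℝ} (hθ : 0 < θ) (hw : 0 < w) :
    Antitone (sosTransition θ w · 0) ∧ Monotone (sosTransition θ w · 2) ∨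
      Monotone (sosTransition θ w · 0) ∧ Antitone (sosTransition θ w · 2) := by
  obtain ⟨hw₀, -⟩ := Pi.lt_def.1 hw
  have hZ : ∀ t : Fin 3, 0 < ∑ r : Fin 3, θ ^ Nat.dist t r * w r := sosPartition_pos hθ hw
  have hZ₀ : 0 < w 0 + θ * w 1 + θ ^ 2 * w 2 := by simpa [Fin.sum_univ_three, Nat.dist] using hZ 0
  have hZ₁ : 0 < θ * w 0 + w 1 + θ * w 2 := by simpa [Fin.sum_univ_three, Nat.dist] using hZ 1
  have hZ₂ : 0 < θ ^ 2 * w 0 + θ * w 1 + w 2 := by simpa [Fin.sum_univ_three, Nat.dist] using hZ 2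
  have hab := mul_nonneg (hw₀ 0) (hw₀ 1)
  have hac := mul_nonneg (mul_nonneg hθ.le (hw₀ 0)) (hw₀ 2)
  have hbc := mul_nonneg (hw₀ 1) (hw₀ 2)
  simp only [Fin.antitone_iff_succ_le, Fin.monotone_iff_le_succ, Fin.forall_fin_two,
    Fin.castSucc_zero, Fin.castSucc_one, Fin.succ_zero_eq_one, Fin.succ_one_eq_two, sosTransition,
    sosPartition, Fin.sum_univ_three, Nat.dist, Fin.isValue, Fin.coe_ofNat_eq_mod, Nat.one_mod,
    Nat.zero_mod, Nat.mod_succ, tsub_zero, zero_tsub, tsub_self, Nat.one_le_ofNat,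
    Nat.sub_eq_zero_of_le, Nat.add_one_sub_one, add_zero, zero_add, pow_zero, pow_one, one_mul]
  -- after clearing denominators, each inequality says that `1 - θ ^ 2` times a nonnegative
  -- combination of `w 0 * w 1`, `θ * w 0 * w 2` and `w 1 * w 2` has a fixed sign
  rcases le_total θ 1 with hθ₁ | hθ₁
  · have hs : 0 ≤ 1 - θ ^ 2 := by nlinarith
    left
    refine ⟨⟨?_, ?_⟩, ?_, ?_⟩ <;> rw [div_le_div_iff₀ (by assumption) (by assumption)] <;>
      nlinarith [mul_nonneg hab hs, mul_nonneg hac hs, mul_nonneg hbc hs]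
  · have hs : 0 ≤ θ ^ 2 - 1 := by nlinarith
    right
    refine ⟨⟨?_, ?_⟩, ?_, ?_⟩ <;> rw [div_le_div_iff₀ (by assumption) (by assumption)] <;>
      nlinarith [mul_nonneg hab hs, mul_nonneg hac hs, mul_nonneg hbc hs]

theorem sos_max_disagreement_general
    (θ x y p₀ p₁ p₂ : ℝ) (hθ0 : 0 < θ) (hx : 0 < x) (hy : 0 < y)
    (hp₀ : 0 ≤ p₀) (hp₁ : 0 ≤ p₁) (hp₂ : 0 ≤ p₂) (hsum : p₀ + p₁ + p₂ = 1) :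
    let D₀ : ℝ := x ^ 2 * p₀ + θ * y ^ 2 * p₁ + θ ^ 2 * p₂
    let D₁ : ℝ := θ * x ^ 2 * p₀ + y ^ 2 * p₁ + θ * p₂
    let D₂ : ℝ := θ ^ 2 * x ^ 2 * p₀ + θ * y ^ 2 * p₁ + p₂
    let q : Fin 3 → Fin 3 → ℝ :=
      ![![x ^ 2 * p₀ / D₀, θ * y ^ 2 * p₁ / D₀, θ ^ 2 * p₂ / D₀],
        ![θ * x ^ 2 * p₀ / D₁, y ^ 2 * p₁ / D₁, θ * p₂ / D₁],
        ![θ ^ 2 * x ^ 2 * p₀ / D₂, θ * y ^ 2 * p₁ / D₂, p₂ / D₂]]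
    (Finset.univ : Finset (Fin 3 × Fin 3 × Fin 3)).sup' Finset.univ_nonempty
        (fun w => |q w.1 w.2.2 - q w.2.1 w.2.2|) =
      max |q 0 0 - q 2 0| |q 2 2 - q 0 2| := by
  intro D₀ D₁ D₂ q
  have hw : 0 < ![x ^ 2 * p₀, y ^ 2 * p₁, p₂] := by
    refine Pi.lt_def.2 ⟨fun i => by fin_cases i <;> dsimp <;> positivity, ?_⟩
    rcases (show 0 < p₀ ∨ 0 < p₁ ∨ 0 < p₂ by by_contra! h; linarith) with h | h | h
    exacts [⟨0, by dsimp; positivity⟩, ⟨1, by dsimp; positivity⟩, ⟨2, h⟩]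
  have hq : q = sosTransition θ ![x ^ 2 * p₀, y ^ 2 * p₁, p₂] := by
    ext t s
    fin_cases t <;> fin_cases s <;>
      simp [q, D₀, D₁, D₂, sosTransition, sosPartition, Fin.sum_univ_three, Nat.dist, mul_assoc]
  rw [hq]
  exact sup'_abs_sub_eq_max_of_antitone_monotone (sum_sosTransition hθ0 hw)
    (sosTransition_antitone_monotone hθ0 hw)

/-- For `θ > 0`, `θ ≠ 1`, the maximum over `i, j, k` of `|pⁱ(k) - pʲ(k)|`
equals `max {|p⁰(0) - p²(0)|, |p²(2) - p⁰(2)|}`, where `pᵗ` is the normalization of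
`(x²p₀, θy²p₁, θ²p₂)`, `(θx²p₀, y²p₁, θp₂)`, `(θ²x²p₀, θy²p₁, p₂)` for `t = 0, 1, 2`. -/
theorem sos_max_disagreement
    (θ x y p₀ p₁ p₂ : ℝ) (hθ0 : 0 < θ) (hθ1 : θ ≠ 1) (hx : 0 < x) (hy : 0 < y)
    (hp₀ : 0 ≤ p₀) (hp₁ : 0 ≤ p₁) (hp₂ : 0 ≤ p₂) (hsum : p₀ + p₁ + p₂ = 1) :
    let D₀ : ℝ := x ^ 2 * p₀ + θ * y ^ 2 * p₁ + θ ^ 2 * p₂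
    let D₁ : ℝ := θ * x ^ 2 * p₀ + y ^ 2 * p₁ + θ * p₂
    let D₂ : ℝ := θ ^ 2 * x ^ 2 * p₀ + θ * y ^ 2 * p₁ + p₂
    let q : Fin 3 → Fin 3 → ℝ :=
      ![![x ^ 2 * p₀ / D₀, θ * y ^ 2 * p₁ / D₀, θ ^ 2 * p₂ / D₀],
        ![θ * x ^ 2 * p₀ / D₁, y ^ 2 * p₁ / D₁, θ * p₂ / D₁],
        ![θ ^ 2 * x ^ 2 * p₀ / D₂, θ * y ^ 2 * p₁ / D₂, p₂ / D₂]]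
    (Finset.univ : Finset (Fin 3 × Fin 3 × Fin 3)).sup' Finset.univ_nonempty
        (fun w => |q w.1 w.2.2 - q w.2.1 w.2.2|) =
      max |q 0 0 - q 2 0| |q 2 2 - q 0 2| :=
  sos_max_disagreement_general θ x y p₀ p₁ p₂ hθ0 hx hy hp₀ hp₁ hp₂ hsum
end

section
/- Let θ > 0 and let x, y > 0 solve the boundary-law system x = (x² + θy² + θ²)/(θ²x² + θy² + 1), y = (θx² + y² + θ)/(θ²x² + θy² + 1). For t, u ≥ 0 with t + u ≤ 1 define f(t, u, θ) = x²t/((x² − θy²)t + θ(θ − y²)u + θy²) − x²θ²t/(θ(θx² − y²)t + (1 − θy²)u + θy²) and g(t, u, θ) = u/(θ(θx² − y²)t + (1 − θy²)u + θy²) − θ²u/((x² − θy²)t + θ(θ − y²)u + θy²). Then |f(t, u, θ)| ≤ |1 − θ²|/(1 + θ²) and |g(t, u, θ)| ≤ |1 − θ²|/(1 + θ²). -/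
/-!
With `q = θ²`, `A = x²t`, `B = u` and `C = θy²(1 - t - u)` the two denominators are
`A + qB + C` and `qA + B + C`, and `f` is `A/(A + qB + C) - qA/(qA + B + C)`; `g` is the same
expression with `A` and `B` exchanged. Over the common denominator this difference equals
`(1 - q) A ((1 + q) B + C) / ((A + qB + C)(qA + B + C))`, and the bound follows from
`(A + qB + C)(qA + B + C) - (1 + q) A ((1 + q) B + C) = q (A - B)² + (1 + q) B C + C² ≥ 0`.
-/

theorem abs_div_sub_mul_div_le {q A B C : ℝ} (hq : 0 ≤ q) (hA : 0 ≤ A) (hB : 0 ≤ B)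
    (hC : 0 ≤ C) (h₁ : 0 < A + q * B + C) (h₂ : 0 < q * A + B + C) :
    |A / (A + q * B + C) - q * A / (q * A + B + C)| ≤ |1 - q| / (1 + q) := by
  have hD : 0 < (A + q * B + C) * (q * A + B + C) := mul_pos h₁ h₂
  have hN : 0 ≤ A * ((1 + q) * B + C) := by positivity
  have hdiff : A / (A + q * B + C) - q * A / (q * A + B + C)
      = (1 - q) * (A * ((1 + q) * B + C)) / ((A + q * B + C) * (q * A + B + C)) := by
    rw [div_sub_div _ _ h₁.ne' h₂.ne']
    ring
  have hle : A * ((1 + q) * B + C) * (1 + q) ≤ (A + q * B + C) * (q * A + B + C) := by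
    nlinarith [mul_nonneg hq (sq_nonneg (A - B)), mul_nonneg (mul_nonneg (by positivity) hB) hC,
      sq_nonneg C]
  rw [hdiff, abs_div, abs_mul, abs_of_nonneg hN, abs_of_pos hD,
    div_le_div_iff₀ hD (by positivity), mul_assoc]
  exact mul_le_mul_of_nonneg_left hle (abs_nonneg _)

theorem convex_combination_pos {a b c t u s : ℝ} (ha : 0 < a) (hb : 0 < b) (hc : 0 < c)
    (ht : 0 ≤ t) (hu : 0 ≤ u) (hs : 0 ≤ s) (h : t + u + s = 1) :
    0 < t * a + u * b + s * c := by
  set m := min (min a b) c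
  have hm : 0 < m := lt_min (lt_min ha hb) hc
  have hma : m ≤ a := (min_le_left _ _).trans (min_le_left _ _)
  have hmb : m ≤ b := (min_le_left _ _).trans (min_le_right _ _)
  have hmc : m ≤ c := min_le_right _ _
  nlinarith [mul_le_mul_of_nonneg_left hma ht, mul_le_mul_of_nonneg_left hmb hu,
    mul_le_mul_of_nonneg_left hmc hs]

theorem sos_gamma_bound_general (θ x y : ℝ) (hθ : 0 < θ) (hx : 0 < x) (hy : 0 < y) :
    ∀ t u : ℝ, 0 ≤ t → 0 ≤ u → t + u ≤ 1 →
      |x ^ 2 * t / ((x ^ 2 - θ * y ^ 2) * t + θ * (θ - y ^ 2) * u + θ * y ^ 2)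
          - x ^ 2 * θ ^ 2 * t / (θ * (θ * x ^ 2 - y ^ 2) * t + (1 - θ * y ^ 2) * u + θ * y ^ 2)|
        ≤ |1 - θ ^ 2| / (1 + θ ^ 2) ∧
      |u / (θ * (θ * x ^ 2 - y ^ 2) * t + (1 - θ * y ^ 2) * u + θ * y ^ 2)
          - θ ^ 2 * u / ((x ^ 2 - θ * y ^ 2) * t + θ * (θ - y ^ 2) * u + θ * y ^ 2)|
        ≤ |1 - θ ^ 2| / (1 + θ ^ 2) := by
  intro t u ht hu htu
  have hs : 0 ≤ 1 - t - u := by linarith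
  have hC : 0 ≤ (1 - t - u) * (θ * y ^ 2) := mul_nonneg hs (by positivity)
  have hD₁ : 0 < x ^ 2 * t + θ ^ 2 * u + (1 - t - u) * (θ * y ^ 2) := by
    have := convex_combination_pos (pow_pos hx 2) (pow_pos hθ 2)
      (by positivity : 0 < θ * y ^ 2) ht hu hs (by ring)
    linarith
  have hD₂ : 0 < θ ^ 2 * (x ^ 2 * t) + u + (1 - t - u) * (θ * y ^ 2) := by
    have := convex_combination_pos (by positivity : 0 < θ ^ 2 * x ^ 2) one_pos
      (by positivity : 0 < θ * y ^ 2) ht hu hs (by ring)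
    linarith
  constructor
  · calc _ = _ := by congr 1; ring
      _ ≤ _ := abs_div_sub_mul_div_le (A := x ^ 2 * t) (B := u) (sq_nonneg θ) (by positivity) hu
        hC hD₁ hD₂
  · calc _ = _ := by congr 1; ring
      _ ≤ _ := abs_div_sub_mul_div_le (A := u) (B := x ^ 2 * t) (sq_nonneg θ) hu (by positivity)
        hC (by linarith) (by linarith)

/-- For a positive solution `(x, y)` of the boundary-law system and
`t, u ≥ 0`, `t + u ≤ 1`, the functions `f(t,u,θ) = p⁰(0) - p²(0)` and
`g(t,u,θ) = p²(2) - p⁰(2)` satisfy `|f| ≤ |1 - θ²|/(1 + θ²)` and `|g| ≤ |1 - θ²|/(1 + θ²)`. -/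
theorem sos_gamma_bound (θ x y : ℝ) (hθ : 0 < θ) (hx : 0 < x) (hy : 0 < y)
    (h1 : x = (x ^ 2 + θ * y ^ 2 + θ ^ 2) / (θ ^ 2 * x ^ 2 + θ * y ^ 2 + 1))
    (h2 : y = (θ * x ^ 2 + y ^ 2 + θ) / (θ ^ 2 * x ^ 2 + θ * y ^ 2 + 1)) :
    ∀ t u : ℝ, 0 ≤ t → 0 ≤ u → t + u ≤ 1 →
      |x ^ 2 * t / ((x ^ 2 - θ * y ^ 2) * t + θ * (θ - y ^ 2) * u + θ * y ^ 2)
          - x ^ 2 * θ ^ 2 * t / (θ * (θ * x ^ 2 - y ^ 2) * t + (1 - θ * y ^ 2) * u + θ * y ^ 2)|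
        ≤ |1 - θ ^ 2| / (1 + θ ^ 2) ∧
      |u / (θ * (θ * x ^ 2 - y ^ 2) * t + (1 - θ * y ^ 2) * u + θ * y ^ 2)
          - θ ^ 2 * u / ((x ^ 2 - θ * y ^ 2) * t + θ * (θ - y ^ 2) * u + θ * y ^ 2)|
        ≤ |1 - θ ^ 2| / (1 + θ ^ 2) :=
  sos_gamma_bound_general θ x y hθ hx hy
end

section
/- Let θ ∈ (0, 1) ∪ (1, ∞) and let y > 0 solve θy³ − y² + (θ² + 1)y − 2θ = 0, with y ∈ (1, 1/θ) if θ < 1 and y ∈ (1/θ, 1) if θ > 1. Let P be the 3×3 matrix (1/Z)·[[1, θy², θ²], [θ/y, y, θ/y], [θ², θy², 1]], where Z = θ² + θy² + 1. Then κ := (1/2)·max over i, j ∈ {0, 1, 2} of ∑ₗ |Pᵢₗ − Pⱼₗ| equals |1 − θ²|/(1 + θ² + θy²). -/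
/-!
The cubic says exactly that the middle row of the unnormalised kernel has the same mass `Z` as
the outer rows, so `P` is stochastic. Rows `0` and `2` are at `ℓ¹` distance `2|1 - θ²|/Z`. The
last two entries of `row 0 - row 1` are positive multiples of `θy - 1`, so their absolute values
add up, and equal row sums turn the distance of rows `0` and `1` into `2|1 - θ/y|/Z`; rows `1`
and `2` are at the same distance by the reflection `l ↦ 2 - l`. Finally `y` lies between `θ` and
`1/θ`, so `θ/y` lies between `1` and `θ²`, and the maximum is attained at rows `0` and `2`.
-/

open Finset

namespace SOS

/-- The kernel `Z • P` of the symmetric boundary law `x = 1`. -/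
noncomputable def weights (θ y : ℝ) : Matrix (Fin 3) (Fin 3) ℝ :=
  !![1, θ * y ^ 2, θ ^ 2;
     θ / y, y, θ / y;
     θ ^ 2, θ * y ^ 2, 1]

def rowDist {m n : Type*} [Fintype n] (A : Matrix m n ℝ) (i j : m) : ℝ :=
  ∑ l, |A i l - A j l|

section rowDist

variable {m n : Type*} [Fintype n]

lemma rowDist_comm (A : Matrix m n ℝ) (i j : m) : rowDist A i j = rowDist A j i := by
  simp only [rowDist, abs_sub_comm]

lemma rowDist_nonneg (A : Matrix m n ℝ) (i j : m) : 0 ≤ rowDist A i j :=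
  sum_nonneg fun _ _ => abs_nonneg _

@[simp]
lemma rowDist_self (A : Matrix m n ℝ) (i : m) : rowDist A i i = 0 := by
  simp [rowDist]

lemma sup'_rowDist_eq_of_le [Fintype m] [Nonempty m] (A : Matrix m n ℝ) (i₀ j₀ : m)
    (h : ∀ i j, rowDist A i j ≤ rowDist A i₀ j₀) :
    (univ : Finset (m × m)).sup' univ_nonempty (fun ij => rowDist A ij.1 ij.2) =
      rowDist A i₀ j₀ :=
  le_antisymm (sup'_le _ _ fun ij _ => h ij.1 ij.2) (le_sup'_of_le _ (mem_univ (i₀, j₀)) le_rfl)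

lemma rowDist_smul {c : ℝ} (hc : 0 ≤ c) (A : Matrix m n ℝ) (i j : m) :
    rowDist (c • A) i j = c * rowDist A i j := by
  simp only [rowDist, Matrix.smul_apply, smul_eq_mul, ← mul_sub, abs_mul, abs_of_nonneg hc,
    mul_sum]

end rowDist

variable {θ y : ℝ}

lemma sum_weights_one (hy : 0 < y)
    (hcubic : θ * y ^ 3 - y ^ 2 + (θ ^ 2 + 1) * y - 2 * θ = 0) :
    ∑ l, weights θ y 1 l = θ ^ 2 + θ * y ^ 2 + 1 := by
  simp only [weights, Fin.sum_univ_three, Matrix.of_apply, Matrix.cons_val]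
  field_simp
  linear_combination -hcubic

lemma rowDist_weights_zero_two : rowDist (weights θ y) 0 2 = 2 * |1 - θ ^ 2| := by
  simp only [rowDist, weights, Fin.sum_univ_three, Matrix.of_apply, Matrix.cons_val]
  rw [sub_self, abs_zero, abs_sub_comm (θ ^ 2)]
  ring

lemma rowDist_weights_zero_one (hθ : 0 ≤ θ) (hy : 0 < y)
    (hcubic : θ * y ^ 3 - y ^ 2 + (θ ^ 2 + 1) * y - 2 * θ = 0) :
    rowDist (weights θ y) 0 1 = 2 * |1 - θ / y| := by
  have hsum := sum_weights_one hy hcubic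
  simp only [weights, Fin.sum_univ_three, Matrix.of_apply, Matrix.cons_val] at hsum
  have htail : |θ * y ^ 2 - y| + |θ ^ 2 - θ / y| = |1 - θ / y| := by
    calc |θ * y ^ 2 - y| + |θ ^ 2 - θ / y| = |y * (θ * y - 1)| + |θ / y * (θ * y - 1)| := by
          congr 2 <;> field_simp
      _ = |(y + θ / y) * (θ * y - 1)| := by
          rw [abs_mul, abs_mul, abs_mul, abs_of_pos hy, abs_of_nonneg (by positivity : 0 ≤ θ / y),
            abs_of_nonneg (by positivity : 0 ≤ y + θ / y)]
          ring
      _ = |θ / y - 1| := by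
          congr 1
          field_simp at hsum ⊢
          linear_combination -hsum
      _ = |1 - θ / y| := abs_sub_comm _ _
  simp only [rowDist, weights, Fin.sum_univ_three, Matrix.of_apply, Matrix.cons_val]
  linarith

lemma rowDist_weights_one_two :
    rowDist (weights θ y) 1 2 = rowDist (weights θ y) 0 1 := by
  simp only [rowDist, weights, Fin.sum_univ_three, Matrix.of_apply, Matrix.cons_val]
  rw [abs_sub_comm (θ / y) (θ ^ 2), abs_sub_comm y, abs_sub_comm (θ / y) 1]
  ring

lemma div_mem_uIcc_one_sq (hθ : 0 < θ) (hy : y ∈ Set.uIcc θ θ⁻¹) :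
    θ / y ∈ Set.uIcc 1 (θ ^ 2) := by
  have hy0 : 0 < y := lt_of_lt_of_le (lt_min hθ (inv_pos.2 hθ)) hy.1
  have hdiv {a b : ℝ} (ha : 0 < a) (hab : a ≤ b) : θ / b ≤ θ / a :=
    div_le_div_of_nonneg_left hθ.le ha hab
  have hθθ : θ / θ = 1 := div_self hθ.ne'
  have hθθi : θ / θ⁻¹ = θ ^ 2 := by rw [div_inv_eq_mul, sq]
  rcases Set.mem_uIcc.1 hy with ⟨hθy, hyθ⟩ | ⟨hθy, hyθ⟩
  · exact Set.mem_uIcc.2 (Or.inr ⟨hθθi ▸ hdiv hy0 hyθ, hθθ ▸ hdiv hθ hθy⟩)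
  · exact Set.mem_uIcc.2 (Or.inl ⟨hθθ ▸ hdiv hy0 hyθ, hθθi ▸ hdiv (inv_pos.2 hθ) hθy⟩)

lemma rowDist_weights_le (hθ : 0 ≤ θ) (hy : 0 < y)
    (hcubic : θ * y ^ 3 - y ^ 2 + (θ ^ 2 + 1) * y - 2 * θ = 0)
    (hmem : θ / y ∈ Set.uIcc 1 (θ ^ 2)) (i j : Fin 3) :
    rowDist (weights θ y) i j ≤ rowDist (weights θ y) 0 2 := by
  have h01 : rowDist (weights θ y) 0 1 ≤ rowDist (weights θ y) 0 2 := by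
    rw [rowDist_weights_zero_one hθ hy hcubic, rowDist_weights_zero_two, abs_sub_comm 1,
      abs_sub_comm 1]
    linarith [Set.abs_sub_left_of_mem_uIcc hmem]
  have h12 := rowDist_weights_one_two (θ := θ) (y := y)
  match i, j with
  | 0, 0 | 1, 1 | 2, 2 => simpa using rowDist_nonneg _ 0 2
  | 0, 1 => exact h01
  | 1, 0 => rwa [rowDist_comm]
  | 1, 2 => rwa [h12]
  | 2, 1 => rwa [rowDist_comm, h12]
  | 0, 2 => exact le_rfl
  | 2, 0 => rw [rowDist_comm]

end SOS

open SOS in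
/-- For the symmetric boundary-law solution (`x = 1`, `y` solving the cubic
`θy³ - y² + (θ²+1)y - 2θ = 0` with `y ∈ (1, 1/θ)` if `θ < 1` and `y ∈ (1/θ, 1)` if
`θ > 1`), the contraction coefficient `κ = (1/2) maxᵢⱼ ∑ₗ |Pᵢₗ - Pⱼₗ|` of the transition
matrix `P = (1/Z)·[[1, θy², θ²], [θ/y, y, θ/y], [θ², θy², 1]]`, `Z = θ² + θy² + 1`,
equals `|1 - θ²|/(1 + θ² + θy²)`. -/
theorem sos_kappa_symmetric (θ y : ℝ) (hθ0 : 0 < θ) (hθ1 : θ ≠ 1) (hy : 0 < y)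
    (hcubic : θ * y ^ 3 - y ^ 2 + (θ ^ 2 + 1) * y - 2 * θ = 0)
    (hlt : θ < 1 → 1 < y ∧ y < 1 / θ)
    (hgt : 1 < θ → 1 / θ < y ∧ y < 1) :
    let Z : ℝ := θ ^ 2 + θ * y ^ 2 + 1
    let P : Matrix (Fin 3) (Fin 3) ℝ :=
      (1 / Z) • !![1, θ * y ^ 2, θ ^ 2;
                   θ / y, y, θ / y;
                   θ ^ 2, θ * y ^ 2, 1]
    (1 / 2) * ((Finset.univ : Finset (Fin 3 × Fin 3)).sup' Finset.univ_nonempty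
        (fun ij => ∑ l : Fin 3, |P ij.1 l - P ij.2 l|)) =
      |1 - θ ^ 2| / (1 + θ ^ 2 + θ * y ^ 2) := by
  intro Z P
  have hZ : 0 ≤ 1 / Z := by positivity
  have hP : P = (1 / Z) • weights θ y := rfl
  have hy_mem : y ∈ Set.uIcc θ θ⁻¹ := by
    rw [one_div] at hlt hgt
    rcases hθ1.lt_or_gt with hθ | hθ
    · obtain ⟨h1y, hyθ⟩ := hlt hθ
      exact Set.Icc_subset_uIcc ⟨by linarith, hyθ.le⟩
    · obtain ⟨hθy, hy1⟩ := hgt hθ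
      exact Set.Icc_subset_uIcc' ⟨hθy.le, by linarith⟩
  have hmax : ∀ i j, rowDist P i j ≤ rowDist P 0 2 := fun i j => by
    simpa only [hP, rowDist_smul hZ] using mul_le_mul_of_nonneg_left
      (rowDist_weights_le hθ0.le hy hcubic (div_mem_uIcc_one_sq hθ0 hy_mem) i j) hZ
  rw [show (fun ij : Fin 3 × Fin 3 => ∑ l : Fin 3, |P ij.1 l - P ij.2 l|) =
      fun ij => rowDist P ij.1 ij.2 from rfl,
    sup'_rowDist_eq_of_le P 0 2 hmax, hP, rowDist_smul hZ, rowDist_weights_zero_two]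
  simp only [Z]
  ring
end
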